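/- arXiv:2509.00227 — 9 statements merged into one kernel-verified Lean document; each statement's English description precedes it below -/
import Mathlib

section
/- Let m, n be positive integers and let G be an m×n matrix with nonnegative integer entries. Then there are only finitely many factorizations of G as a product of adjacency matrices of bipartite graphs without isolated vertices; precisely, the set of triples (q, H, K), where q is a positive integer, H is an m×q matrix with nonnegative integer entries, K is a q×n matrix with nonnegative integer entries, G = H·K, every row and every column of H contains a nonzero entry, and every row and every column of K contains a nonzero entry, is finite. -/
/-- For an `m × n` matrix `G` over `ℕ`, the set of factorizations
`G = H * K` through an inner dimension `q`, where `H` and `K` are biadjacency matrices of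
bipartite graphs without isolated vertices (i.e. every row and every column of `H` and of `K`
contains a nonzero entry), is finite. -/
theorem finitely_many_bipartite_factorizations (m n : ℕ) (hm : 0 < m) (hn : 0 < n)
    (G : Matrix (Fin m) (Fin n) ℕ) :
    {x : (q : ℕ) × Matrix (Fin m) (Fin q) ℕ × Matrix (Fin q) (Fin n) ℕ |
        0 < x.1 ∧ G = x.2.1 * x.2.2 ∧
        (∀ i : Fin m, ∃ k : Fin x.1, x.2.1 i k ≠ 0) ∧
        (∀ k : Fin x.1, ∃ i : Fin m, x.2.1 i k ≠ 0) ∧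
        (∀ k : Fin x.1, ∃ j : Fin n, x.2.2 k j ≠ 0) ∧
        (∀ j : Fin n, ∃ k : Fin x.1, x.2.2 k j ≠ 0)}.Finite := by
  classical
  set S := ∑ i, ∑ j, G i j with hS
  have hbig : ∀ q : ℕ,
      ({p : Matrix (Fin m) (Fin q) ℕ × Matrix (Fin q) (Fin n) ℕ |
        (∀ i k, p.1 i k ≤ S) ∧ (∀ k j, p.2 k j ≤ S)}).Finite := by
    intro q
    have h1 : ({H : Matrix (Fin m) (Fin q) ℕ | ∀ i k, H i k ≤ S}).Finite := by
      have : ({H : Matrix (Fin m) (Fin q) ℕ | ∀ i k, H i k ≤ S}) ⊆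
          Set.pi Set.univ (fun _ : Fin m => Set.pi Set.univ fun _ : Fin q => Set.Iic S) := by
        intro H hH i _ k _
        exact hH i k
      exact (Set.Finite.pi fun _ => Set.Finite.pi fun _ => Set.finite_Iic S).subset this
    have h2 : ({K : Matrix (Fin q) (Fin n) ℕ | ∀ k j, K k j ≤ S}).Finite := by
      have : ({K : Matrix (Fin q) (Fin n) ℕ | ∀ k j, K k j ≤ S}) ⊆
          Set.pi Set.univ (fun _ : Fin q => Set.pi Set.univ fun _ : Fin n => Set.Iic S) := by
        intro K hK k _ j _
        exact hK k j
      exact (Set.Finite.pi fun _ => Set.Finite.pi fun _ => Set.finite_Iic S).subset this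
    exact (h1.prod h2).subset fun p hp => ⟨hp.1, hp.2⟩
  have hF : (⋃ q ∈ Finset.range (S + 1),
      (fun p : Matrix (Fin m) (Fin q) ℕ × Matrix (Fin q) (Fin n) ℕ =>
        (⟨q, p⟩ : (q : ℕ) × Matrix (Fin m) (Fin q) ℕ × Matrix (Fin q) (Fin n) ℕ)) ''
        {p | (∀ i k, p.1 i k ≤ S) ∧ (∀ k j, p.2 k j ≤ S)}).Finite :=
    Set.Finite.biUnion (Finset.range (S + 1)).finite_toSet
      (fun q _ => (hbig q).image _)
  refine hF.subset ?_
  rintro ⟨q, H, K⟩ ⟨hq, hG, _hHr, hHc, hKr, _hKc⟩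
  simp only [Set.mem_setOf_eq] at *
  have hGentry : ∀ i j, G i j = ∑ k, H i k * K k j := by
    intro i j
    rw [hG]
    simp [Matrix.mul_apply]
  have hGle : ∀ i j, G i j ≤ S := by
    intro i j
    calc G i j ≤ ∑ j', G i j' := Finset.single_le_sum (fun _ _ => Nat.zero_le _) (Finset.mem_univ j)
    _ ≤ S := Finset.single_le_sum (f := fun i => ∑ j', G i j') (fun _ _ => Nat.zero_le _) (Finset.mem_univ i)
  have hqS : q ≤ S := by
    have : S = ∑ k : Fin q, (∑ i, H i k) * (∑ j, K k j) := by
      show (∑ i, ∑ j, G i j) = _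
      simp only [hGentry, Finset.sum_mul_sum]
      rw [show (∑ i, ∑ j, ∑ k : Fin q, H i k * K k j) = ∑ k : Fin q, ∑ i, ∑ j, H i k * K k j by
        exact (Finset.sum_congr rfl fun i _ => Finset.sum_comm).trans Finset.sum_comm]
    calc q = ∑ _k : Fin q, 1 := by simp
      _ ≤ ∑ k : Fin q, (∑ i, H i k) * (∑ j, K k j) := by
        refine Finset.sum_le_sum fun k _ => ?_
        obtain ⟨i, hi⟩ := hHc k
        obtain ⟨j, hj⟩ := hKr k
        have h1 : 1 ≤ ∑ i', H i' k :=
          le_trans (Nat.one_le_iff_ne_zero.2 hi)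
            (Finset.single_le_sum (f := fun i' => H i' k) (fun _ _ => Nat.zero_le _) (Finset.mem_univ i))
        have h2 : 1 ≤ ∑ j', K k j' :=
          le_trans (Nat.one_le_iff_ne_zero.2 hj)
            (Finset.single_le_sum (f := fun j' => K k j') (fun _ _ => Nat.zero_le _) (Finset.mem_univ j))
        exact Nat.mul_le_mul h1 h2
      _ = S := this.symm
  refine Set.mem_biUnion (Finset.mem_coe.2 (Finset.mem_range.2 (Nat.lt_succ_of_le hqS))) ?_
  refine ⟨(H, K), ⟨?_, ?_⟩, rfl⟩
  · intro i k
    obtain ⟨j, hj⟩ := hKr k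
    calc H i k ≤ H i k * K k j := Nat.le_mul_of_pos_right _ (Nat.pos_of_ne_zero hj)
      _ ≤ ∑ k', H i k' * K k' j :=
        Finset.single_le_sum (f := fun k' => H i k' * K k' j) (fun _ _ => Nat.zero_le _) (Finset.mem_univ k)
      _ = G i j := (hGentry i j).symm
      _ ≤ S := hGle i j
  · intro k j
    obtain ⟨i, hi⟩ := hHc k
    calc K k j ≤ H i k * K k j := Nat.le_mul_of_pos_left _ (Nat.pos_of_ne_zero hi)
      _ ≤ ∑ k', H i k' * K k' j :=
        Finset.single_le_sum (f := fun k' => H i k' * K k' j) (fun _ _ => Nat.zero_le _) (Finset.mem_univ k)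
      _ = G i j := (hGentry i j).symm
      _ ≤ S := hGle i j
end

section
/- Let G be the 5×10 real matrix with rows (1,1,1,1,0,0,0,0,0,0), (0,0,0,1,1,0,0,0,0,0), (0,0,0,0,1,1,0,0,0,0), (0,0,0,0,0,1,1,0,0,0), (0,0,0,0,0,0,1,1,1,1) (the biadjacency matrix of the 'large double broom' graph). Then the operator norm of G, as a linear map from ℝ¹⁰ to ℝ⁵ with Euclidean norms (equivalently, the largest singular value of G), equals √((5+√17)/2); equivalently, the largest eigenvalue of G·Gᵀ is (5+√17)/2, with positive eigenvector ((5+√17)/2, (1+√17)/2, 2, (1+√17)/2, (5+√17)/2). -/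
open Matrix

theorem fin10sum (f : Fin 10 → ℝ) :
    ∑ i, f i = f 0 + f 1 + f 2 + f 3 + f 4 + f 5 + f 6 + f 7 + f 8 + f 9 := by
  simp [Fin.sum_univ_succ, Fin.succ]; ring

set_option maxHeartbeats 1000000 in
lemma broom_quad_ineq (s : ℝ) (hs2 : s^2 = 17) (hs4 : 4 ≤ s)
    (x0 x1 x2 x3 x4 x5 x6 x7 x8 x9 : ℝ) :
    (x0+x1+x2+x3)^2 + (x3+x4)^2 + (x4+x5)^2 + (x5+x6)^2 + (x6+x7+x8+x9)^2 ≤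
      ((5+s)/2) * (x0^2+x1^2+x2^2+x3^2+x4^2+x5^2+x6^2+x7^2+x8^2+x9^2) := by
  have key : ((5+s)/2) * (x0^2+x1^2+x2^2+x3^2+x4^2+x5^2+x6^2+x7^2+x8^2+x9^2)
      - ((x0+x1+x2+x3)^2 + (x3+x4)^2 + (x4+x5)^2 + (x5+x6)^2 + (x6+x7+x8+x9)^2)
      = (3/2+s/2) * (x0 + (3/4 - s/4)*x1 + (3/4 - s/4)*x2 + (3/4 - s/4)*x3)^2
      + (9/4+s/4) * (x1 + (1/8 - s/8)*x2 + (1/8 - s/8)*x3)^2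
      + (7/4+s/4) * (x2 - (1/8 + s/8)*x3)^2
      + (1/8+s/8) * (x3 + (1/2 - s/2)*x4)^2
      + (x4 - x5)^2
      + (s/2-1/2) * (x5 - (1/8 + s/8)*x6)^2
      + (3/8+3*s/8) * (x6 + (1/6 - s/6)*x7 + (1/6 - s/6)*x8 + (1/6 - s/6)*x9)^2
      + (5/3+s/3) * (x7 - (1/2)*x8 - (1/2)*x9)^2
      + (5/4+s/4) * (x8 - x9)^2 := by
    linear_combination ((1/96)*x9^2 - (1/96)*x9^2*s + (1/48)*x8*x9 - (1/48)*x8*x9*s + (1/96)*x8^2 - (1/96)*x8^2*s + (1/48)*x7*x9 - (1/48)*x7*x9*s + (1/48)*x7*x8 - (1/48)*x7*x8*s + (1/96)*x7^2 - (1/96)*x7^2*s + (1/8)*x6*x9 + (1/8)*x6*x8 + (1/8)*x6*x7 - (1/128)*x6^2 - (1/128)*x6^2*s + (1/8)*x5*x6 + (1/32)*x4^2 - (1/32)*x4^2*s + (1/8)*x3*x4 + (1/32)*x3^2 - (5/128)*x3^2*s + (25/128)*x2*x3 - (9/128)*x2*x3*s + (17/256)*x2^2 - (9/256)*x2^2*s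 + (1/4)*x1*x3 - (1/16)*x1*x3*s + (1/4)*x1*x2 - (1/16)*x1*x2*s + (3/32)*x1^2 - (1/32)*x1^2*s + (1/4)*x0*x3 + (1/4)*x0*x2 + (1/4)*x0*x1) * hs2
  linarith [mul_nonneg (by linarith : (0:ℝ) ≤ 3/2+s/2) (sq_nonneg (x0 + (3/4 - s/4)*x1 + (3/4 - s/4)*x2 + (3/4 - s/4)*x3)),
    mul_nonneg (by linarith : (0:ℝ) ≤ 9/4+s/4) (sq_nonneg (x1 + (1/8 - s/8)*x2 + (1/8 - s/8)*x3)),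
    mul_nonneg (by linarith : (0:ℝ) ≤ 7/4+s/4) (sq_nonneg (x2 - (1/8 + s/8)*x3)),
    mul_nonneg (by linarith : (0:ℝ) ≤ 1/8+s/8) (sq_nonneg (x3 + (1/2 - s/2)*x4)),
    sq_nonneg (x4 - x5),
    mul_nonneg (by linarith : (0:ℝ) ≤ s/2-1/2) (sq_nonneg (x5 - (1/8 + s/8)*x6)),
    mul_nonneg (by linarith : (0:ℝ) ≤ 3/8+3*s/8) (sq_nonneg (x6 + (1/6 - s/6)*x7 + (1/6 - s/6)*x8 + (1/6 - s/6)*x9)),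
    mul_nonneg (by linarith : (0:ℝ) ≤ 5/3+s/3) (sq_nonneg (x7 - (1/2)*x8 - (1/2)*x9)),
    mul_nonneg (by linarith : (0:ℝ) ≤ 5/4+s/4) (sq_nonneg (x8 - x9)), key]


/-- The operator norm of a real `m × n` matrix acting between Euclidean spaces
(`ℓ²` norms on domain and codomain), i.e. its largest singular value. -/
noncomputable def euclideanOpNorm {m n : ℕ} (A : Matrix (Fin m) (Fin n) ℝ) : ℝ :=
  ‖(Matrix.toEuclideanLin.trans LinearMap.toContinuousLinearMap) A‖

set_option maxHeartbeats 1000000 in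
/-- The biadjacency matrix `G` of the large double broom has Euclidean operator
norm `√((5+√17)/2)`; equivalently, `G * Gᵀ` has largest eigenvalue `(5+√17)/2`, with positive
eigenvector `((5+√17)/2, (1+√17)/2, 2, (1+√17)/2, (5+√17)/2)`. -/
theorem largeDoubleBroom_opNorm :
    let G : Matrix (Fin 5) (Fin 10) ℝ :=
      !![1,1,1,1,0,0,0,0,0,0;
         0,0,0,1,1,0,0,0,0,0;
         0,0,0,0,1,1,0,0,0,0;
         0,0,0,0,0,1,1,0,0,0;
         0,0,0,0,0,0,1,1,1,1]
    let v : Fin 5 → ℝ :=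
      ![(5 + Real.sqrt 17)/2, (1 + Real.sqrt 17)/2, 2, (1 + Real.sqrt 17)/2,
        (5 + Real.sqrt 17)/2]
    euclideanOpNorm G = Real.sqrt ((5 + Real.sqrt 17)/2) ∧
    (G * Gᵀ) *ᵥ v = ((5 + Real.sqrt 17)/2) • v ∧
    (∀ i, 0 < v i) := by
  intro G v
  refine ⟨?_, ?_, ?_⟩
  · show euclideanOpNorm G = Real.sqrt ((5 + Real.sqrt 17)/2)
    have hs2 : Real.sqrt 17 ^ 2 = 17 := Real.sq_sqrt (by norm_num)
    have hs4 : (4:ℝ) ≤ Real.sqrt 17 := by nlinarith [Real.sqrt_nonneg 17, hs2]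
    set s : ℝ := Real.sqrt 17 with hsdef
    have hlam0 : (0:ℝ) ≤ (5 + s)/2 := by linarith
    set f := (Matrix.toEuclideanLin.trans LinearMap.toContinuousLinearMap) G with hf
    have hfx : ∀ (x : EuclideanSpace ℝ (Fin 10)) (i : Fin 5), f x i = (G *ᵥ (fun j => x j)) i :=
      fun _ _ => rfl
    have hnorm5 : ∀ (y : EuclideanSpace ℝ (Fin 5)), ‖y‖ = Real.sqrt (∑ i, (y i)^2) := by
      intro y; rw [EuclideanSpace.norm_eq]; simp [sq_abs]
    have hnorm10 : ∀ (y : EuclideanSpace ℝ (Fin 10)), ‖y‖ = Real.sqrt (∑ i, (y i)^2) := by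
      intro y; rw [EuclideanSpace.norm_eq]; simp [sq_abs]
    have hGv : ∀ (x : Fin 10 → ℝ), G *ᵥ x =
        ![x 0+x 1+x 2+x 3, x 3+x 4, x 4+x 5, x 5+x 6, x 6+x 7+x 8+x 9] := by
      intro x; funext i
      fin_cases i <;>
        simp [G, Matrix.mulVec, dotProduct, Fin.sum_univ_succ, Fin.succ] <;> ring
    apply le_antisymm
    · refine ContinuousLinearMap.opNorm_le_bound _ (Real.sqrt_nonneg _) fun x => ?_
      rw [hnorm5 (f x), hnorm10 x, ← Real.sqrt_mul hlam0]
      apply Real.sqrt_le_sqrt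
      have expand : ∀ i, f x i = (![(x 0)+(x 1)+(x 2)+(x 3), (x 3)+(x 4), (x 4)+(x 5), (x 5)+(x 6), (x 6)+(x 7)+(x 8)+(x 9)] : Fin 5 → ℝ) i := by
        intro i; rw [hfx x i, hGv (fun j => x j)]
      simp only [expand]
      rw [Fin.sum_univ_five, fin10sum (fun i => (x i)^2)]
      simp only [Matrix.cons_val_zero, Matrix.cons_val_one, Matrix.head_cons,
        Matrix.cons_val_two, Matrix.tail_cons, Matrix.cons_val_three, Matrix.cons_val_four]
      exact broom_quad_ineq s hs2 hs4 (x 0) (x 1) (x 2) (x 3) (x 4) (x 5) (x 6) (x 7) (x 8) (x 9)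
    · set w : EuclideanSpace ℝ (Fin 10) := (WithLp.equiv 2 (Fin 10 → ℝ)).symm
        ![(5+s)/2,(5+s)/2,(5+s)/2,3+s,(5+s)/2,(5+s)/2,3+s,(5+s)/2,(5+s)/2,(5+s)/2] with hw
      have hwnorm : ‖w‖ = Real.sqrt (136 + 32*s) := by
        rw [hnorm10]
        congr 1
        show ∑ i : Fin 10, (![(5+s)/2,(5+s)/2,(5+s)/2,3+s,(5+s)/2,(5+s)/2,3+s,(5+s)/2,(5+s)/2,(5+s)/2] i)^2 = _
        rw [fin10sum]
        show ((5+s)/2)^2 + ((5+s)/2)^2 + ((5+s)/2)^2 + (3+s)^2 + ((5+s)/2)^2 + ((5+s)/2)^2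
            + (3+s)^2 + ((5+s)/2)^2 + ((5+s)/2)^2 + ((5+s)/2)^2 = 136 + 32*s
        linear_combination (4:ℝ) * hs2
      have hfw : ‖f w‖ = Real.sqrt ((5+s)/2 * (136+32*s)) := by
        rw [hnorm5]
        congr 1
        have hwj : (fun j => w j) = ![(5+s)/2,(5+s)/2,(5+s)/2,3+s,(5+s)/2,(5+s)/2,3+s,(5+s)/2,(5+s)/2,(5+s)/2] := rfl
        have expand : ∀ i, f w i = (![(5+s)/2+(5+s)/2+(5+s)/2+(3+s), (3+s)+(5+s)/2, (5+s)/2+(5+s)/2, (5+s)/2+(3+s), (3+s)+(5+s)/2+(5+s)/2+(5+s)/2] : Fin 5 → ℝ) i := by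
          intro i
          rw [hfx w i, hwj, hGv]
          fin_cases i <;> rfl
        simp only [expand]
        rw [Fin.sum_univ_five]
        simp only [Matrix.cons_val_zero, Matrix.cons_val_one, Matrix.head_cons,
          Matrix.cons_val_two, Matrix.tail_cons, Matrix.cons_val_three, Matrix.cons_val_four]
        linear_combination (2:ℝ) * hs2
      have hwpos : (0:ℝ) < Real.sqrt (136 + 32*s) := Real.sqrt_pos.mpr (by linarith)
      have hle := f.le_opNorm w
      rw [hfw, hwnorm, Real.sqrt_mul hlam0] at hle
      exact le_of_mul_le_mul_right hle hwpos


  · have hs2 : Real.sqrt 17 ^ 2 = 17 := Real.sq_sqrt (by norm_num)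
    funext i
    fin_cases i <;>
      simp [G, v, Matrix.mulVec, Matrix.mul_apply, dotProduct, Fin.sum_univ_succ] <;>
      ring_nf <;> nlinarith [hs2]
  · intro i
    fin_cases i <;> simp [v] <;> positivity
end

section
/- Let G be the 7×9 real matrix with rows (1,0,0,0,0,0,0,0,0), (1,1,1,0,0,0,0,0,0), (0,0,1,1,0,0,0,0,0), (0,0,0,1,1,1,0,0,0), (0,0,0,0,0,1,1,0,0), (0,0,0,0,0,0,1,1,1), (0,0,0,0,0,0,0,0,1) (the biadjacency matrix of the 'quipu' graph). Then the square of the operator norm of G (as a linear map from ℝ⁹ to ℝ⁷ with Euclidean norms; equivalently, the largest eigenvalue of G·Gᵀ) is the unique real root t of x³ − 8x² + 17x − 5 in the open interval (4,5); in particular, setting t = ‖G‖², one has t³ = 8t² − 17t + 5 and 4 < t < 5. -/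
open Matrix

private lemma fin_succ_two' {n : ℕ} : Fin.succ (2 : Fin (n+3)) = (3 : Fin (n+4)) := rfl
private lemma fin_succ_three' {n : ℕ} : Fin.succ (3 : Fin (n+4)) = (4 : Fin (n+5)) := rfl
private lemma fin_succ_four' {n : ℕ} : Fin.succ (4 : Fin (n+5)) = (5 : Fin (n+6)) := rfl
private lemma fin_succ_five' {n : ℕ} : Fin.succ (5 : Fin (n+6)) = (6 : Fin (n+7)) := rfl
private lemma fin_succ_six' {n : ℕ} : Fin.succ (6 : Fin (n+7)) = (7 : Fin (n+8)) := rfl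
private lemma fin_succ_seven' {n : ℕ} : Fin.succ (7 : Fin (n+8)) = (8 : Fin (n+9)) := rfl

private lemma quipu_normsq {k : ℕ} (y : EuclideanSpace ℝ (Fin k)) : ‖y‖^2 = ∑ i, (y i)^2 := by
  rw [EuclideanSpace.norm_eq, Real.sq_sqrt (by positivity)]
  simp [sq_abs]

set_option maxHeartbeats 2000000 in
private lemma quipu_key (r : ℝ) (h4 : 4 < r) (h45 : r < 9/2)
    (hcub : r ^ 3 - 8 * r ^ 2 + 17 * r - 5 = 0)
    (a1 a2 a3 a4 a5 a6 a7 a8 a9 : ℝ) :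
    a1^2 + (a1 + a2 + a3)^2 + (a3 + a4)^2 + (a4 + a5 + a6)^2 + (a6 + a7)^2 + (a7 + a8 + a9)^2 + a9^2 ≤ r * (a1^2 + a2^2 + a3^2 + a4^2 + a5^2 + a6^2 + a7^2 + a8^2 + a9^2) := by
  have hp : (0:ℝ) < (r - 4) * (9/2 - r) := mul_pos (by linarith) (by linarith)
  have hd1 : (0:ℝ) ≤ (-2) + (1)*r := by nlinarith [hp, sq_nonneg (r-4)]
  have hd2 : (0:ℝ) ≤ (-1/5)*r + (1/5)*r^2 := by nlinarith [hp, sq_nonneg (r-4)]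
  have hd3 : (0:ℝ) ≤ (4) + (-5)*r + (1)*r^2 := by nlinarith [hp, sq_nonneg (r-4)]
  have hd4 : (0:ℝ) ≤ (-3) + (14/5)*r + (-2/5)*r^2 := by nlinarith [hp, sq_nonneg (r-4)]
  have hd5 : (0:ℝ) ≤ (-10/31) + (13/31)*r + (2/31)*r^2 := by nlinarith [hp, sq_nonneg (r-4)]
  have hd6 : (0:ℝ) ≤ (1) + (-9/5)*r + (2/5)*r^2 := by nlinarith [hp, sq_nonneg (r-4)]
  have hd7 : (0:ℝ) ≤ (-6) + (6)*r + (-1)*r^2 := by nlinarith [hp, sq_nonneg (r-4)]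
  have hd8 : (0:ℝ) ≤ (-10/13) + (14/13)*r + (-1/13)*r^2 := by nlinarith [hp, sq_nonneg (r-4)]
  have hiden : r * (a1^2 + a2^2 + a3^2 + a4^2 + a5^2 + a6^2 + a7^2 + a8^2 + a9^2) - (a1^2 + (a1 + a2 + a3)^2 + (a3 + a4)^2 + (a4 + a5 + a6)^2 + (a6 + a7)^2 + (a7 + a8 + a9)^2 + a9^2) =
      ((-2) + (1)*r) * (((1))*a1 + ((1) + (-6/5)*r + (1/5)*r^2)*a2 + ((1) + (-6/5)*r + (1/5)*r^2)*a3)^2 +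
      ((-1/5)*r + (1/5)*r^2) * (((1))*a2 + ((11) + (-7)*r + (1)*r^2)*a3)^2 +
      ((4) + (-5)*r + (1)*r^2) * (((1))*a3 + ((-1) + (9/5)*r + (-2/5)*r^2)*a4)^2 +
      ((-3) + (14/5)*r + (-2/5)*r^2) * (((1))*a4 + ((21/31) + (-18/31)*r + (2/31)*r^2)*a5 + ((21/31) + (-18/31)*r + (2/31)*r^2)*a6)^2 +
      ((-10/31) + (13/31)*r + (2/31)*r^2) * (((1))*a5 + ((4) + (-14/5)*r + (2/5)*r^2)*a6)^2 +
      ((1) + (-9/5)*r + (2/5)*r^2) * (((1))*a6 + ((-4) + (5)*r + (-1)*r^2)*a7)^2 +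
      ((-6) + (6)*r + (-1)*r^2) * (((1))*a7 + ((3/13) + (1/13)*r + (-1/13)*r^2)*a8 + ((3/13) + (1/13)*r + (-1/13)*r^2)*a9)^2 +
      ((-10/13) + (14/13)*r + (-1/13)*r^2) * (((1))*a8 + ((12/5) + (-8/5)*r + (1/5)*r^2)*a9)^2 := by
    linear_combination ((-2324/4225) * a9^2 + (-394/845) * a8*a9 + (-3/169) * a8^2 + (-2/13) * a7*a9 + (-2/13) * a7*a8 + (12/5) * a7^2 + (-6/5) * a6*a7 + (-680/961) * a6^2 + (-3204/4805) * a5*a6 + (-672/4805) * a5^2 + (-64/155) * a4*a6 + (-64/155) * a4*a5 + (3/5) * a4^2 + (-6/5) * a3*a4 + (4/5) * a3^2 + (-2/5) * a2*a3 + (-1/5) * a2^2 + (-2/5) * a1*a3 + (-2/5) * a1*a2 + (1577/4225) * r*a9^2 + (-14/845) * r*a8*a9 + (-4/169) * r*a8^2 + (-2/13) * r*a7*a9 + (-2/13) * r*a7*a8 + (-23/5) * r*a7^2 + (4/5) * r*a6*a7 + (2644/4805) * r*a6^2 + (1072/4805) * r*a5*a6 + (132/961) * r*a5^2 + (8/155)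 * r*a4*a6 + (8/155) * r*a4*a5 + (-37/25) * r*a4^2 + (4/5) * r*a3*a4 + (-54/25) * r*a3^2 + (2/25) * r*a2*a3 + (6/25) * r*a2^2 + (-22/325) * r^2*a9^2 + (13/5) * r^2*a7^2 + (-804/24025) * r^2*a6^2 + (-272/4805) * r^2*a5*a6 + (-136/4805) * r^2*a5^2 + (24/25) * r^2*a4^2 + (34/25) * r^2*a3^2 + (-2/25) * r^2*a2*a3 + (-1/25) * r^2*a2^2 + (38/4225) * r^3*a9^2 + (2/169) * r^3*a8*a9 + (1/169) * r^3*a8^2 + (-2/5) * r^3*a7^2 + (-208/24025) * r^3*a6^2 + (16/4805) * r^3*a5*a6 + (8/4805) * r^3*a5^2 + (-4/25) * r^3*a4^2 + (-1/5) * r^3*a3^2) * hcub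
  have hn1 : (0:ℝ) ≤ ((-2) + (1)*r) * (((1))*a1 + ((1) + (-6/5)*r + (1/5)*r^2)*a2 + ((1) + (-6/5)*r + (1/5)*r^2)*a3)^2 := mul_nonneg hd1 (sq_nonneg _)
  have hn2 : (0:ℝ) ≤ ((-1/5)*r + (1/5)*r^2) * (((1))*a2 + ((11) + (-7)*r + (1)*r^2)*a3)^2 := mul_nonneg hd2 (sq_nonneg _)
  have hn3 : (0:ℝ) ≤ ((4) + (-5)*r + (1)*r^2) * (((1))*a3 + ((-1) + (9/5)*r + (-2/5)*r^2)*a4)^2 := mul_nonneg hd3 (sq_nonneg _)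
  have hn4 : (0:ℝ) ≤ ((-3) + (14/5)*r + (-2/5)*r^2) * (((1))*a4 + ((21/31) + (-18/31)*r + (2/31)*r^2)*a5 + ((21/31) + (-18/31)*r + (2/31)*r^2)*a6)^2 := mul_nonneg hd4 (sq_nonneg _)
  have hn5 : (0:ℝ) ≤ ((-10/31) + (13/31)*r + (2/31)*r^2) * (((1))*a5 + ((4) + (-14/5)*r + (2/5)*r^2)*a6)^2 := mul_nonneg hd5 (sq_nonneg _)
  have hn6 : (0:ℝ) ≤ ((1) + (-9/5)*r + (2/5)*r^2) * (((1))*a6 + ((-4) + (5)*r + (-1)*r^2)*a7)^2 := mul_nonneg hd6 (sq_nonneg _)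
  have hn7 : (0:ℝ) ≤ ((-6) + (6)*r + (-1)*r^2) * (((1))*a7 + ((3/13) + (1/13)*r + (-1/13)*r^2)*a8 + ((3/13) + (1/13)*r + (-1/13)*r^2)*a9)^2 := mul_nonneg hd7 (sq_nonneg _)
  have hn8 : (0:ℝ) ≤ ((-10/13) + (14/13)*r + (-1/13)*r^2) * (((1))*a8 + ((12/5) + (-8/5)*r + (1/5)*r^2)*a9)^2 := mul_nonneg hd8 (sq_nonneg _)
  linarith [hiden, hn1, hn2, hn3, hn4, hn5, hn6, hn7, hn8]

set_option maxHeartbeats 2000000 in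
/-- For the biadjacency matrix `G` of the quipu graph, the square `t = ‖G‖²` of
its Euclidean operator norm satisfies `t³ = 8t² − 17t + 5` and `4 < t < 5`, and `t` is the
unique real root of `x³ − 8x² + 17x − 5` in the open interval `(4,5)`. -/
theorem quipu_opNorm_sq :
    let G : Matrix (Fin 7) (Fin 9) ℝ :=
      !![1,0,0,0,0,0,0,0,0;
         1,1,1,0,0,0,0,0,0;
         0,0,1,1,0,0,0,0,0;
         0,0,0,1,1,1,0,0,0;
         0,0,0,0,0,1,1,0,0;
         0,0,0,0,0,0,1,1,1;
         0,0,0,0,0,0,0,0,1]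
    let t : ℝ := (euclideanOpNorm G) ^ 2
    t ^ 3 = 8 * t ^ 2 - 17 * t + 5 ∧ 4 < t ∧ t < 5 ∧
    (∀ s : ℝ, s ^ 3 - 8 * s ^ 2 + 17 * s - 5 = 0 → 4 < s → s < 5 → s = t) := by
  intro G t
  -- obtain the root r of the cubic in (4,5)
  obtain ⟨r, hrmem, hcub⟩ : ∃ r ∈ Set.Ioo (4:ℝ) 5, r ^ 3 - 8 * r ^ 2 + 17 * r - 5 = 0 := by
    have hcont : ContinuousOn (fun x : ℝ => x ^ 3 - 8 * x ^ 2 + 17 * x - 5) (Set.Icc 4 5) := by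
      fun_prop
    have hsub := intermediate_value_Ioo (by norm_num : (4:ℝ) ≤ 5) hcont
    have h0 : (0:ℝ) ∈ Set.Ioo ((fun x : ℝ => x ^ 3 - 8 * x ^ 2 + 17 * x - 5) 4)
        ((fun x : ℝ => x ^ 3 - 8 * x ^ 2 + 17 * x - 5) 5) := by norm_num
    obtain ⟨x, hx, hfx⟩ := hsub h0
    exact ⟨x, hx, hfx⟩
  obtain ⟨h4, h5⟩ := hrmem
  have h45 : r < 9/2 := by
    by_contra hcon
    push_neg at hcon
    nlinarith [hcub, mul_nonneg (by linarith : (0:ℝ) ≤ r - 9/2)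
      (by nlinarith : (0:ℝ) ≤ r^2 - 7/2*r + 5/4)]
  set T : EuclideanSpace ℝ (Fin 9) →L[ℝ] EuclideanSpace ℝ (Fin 7) :=
    (Matrix.toEuclideanLin.trans LinearMap.toContinuousLinearMap)
      (!![1,0,0,0,0,0,0,0,0;
         1,1,1,0,0,0,0,0,0;
         0,0,1,1,0,0,0,0,0;
         0,0,0,1,1,1,0,0,0;
         0,0,0,0,0,1,1,0,0;
         0,0,0,0,0,0,1,1,1;
         0,0,0,0,0,0,0,0,1] : Matrix (Fin 7) (Fin 9) ℝ) with hTdef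
  have hT : t = ‖T‖ ^ 2 := rfl
  have happ : ∀ x : EuclideanSpace ℝ (Fin 9), ‖T x‖^2
      = (x 0)^2 + (x 0 + x 1 + x 2)^2 + (x 2 + x 3)^2 + (x 3 + x 4 + x 5)^2
        + (x 5 + x 6)^2 + (x 6 + x 7 + x 8)^2 + (x 8)^2 := by
    intro x
    rw [quipu_normsq]
    simp [hTdef, Matrix.toEuclideanLin_apply, Matrix.mulVec, dotProduct,
      Fin.sum_univ_succ, fin_succ_two', fin_succ_three', fin_succ_four', fin_succ_five',
      fin_succ_six', fin_succ_seven']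
    ring
  have hxnorm : ∀ x : EuclideanSpace ℝ (Fin 9),
      ‖x‖^2 = (x 0)^2+(x 1)^2+(x 2)^2+(x 3)^2+(x 4)^2+(x 5)^2+(x 6)^2+(x 7)^2+(x 8)^2 := by
    intro x
    rw [quipu_normsq]
    simp [Fin.sum_univ_succ, fin_succ_two', fin_succ_three', fin_succ_four', fin_succ_five',
      fin_succ_six', fin_succ_seven']
    ring
  -- upper bound
  have hub : ‖T‖ ≤ Real.sqrt r := by
    refine T.opNorm_le_bound (Real.sqrt_nonneg r) fun x => ?_
    have h2 : ‖T x‖^2 ≤ r * ‖x‖^2 := by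
      rw [happ x, hxnorm x]
      linarith [quipu_key r h4 h45 hcub (x 0) (x 1) (x 2) (x 3) (x 4) (x 5) (x 6) (x 7) (x 8)]
    calc ‖T x‖ = Real.sqrt (‖T x‖^2) := (Real.sqrt_sq (norm_nonneg _)).symm
      _ ≤ Real.sqrt (r * ‖x‖^2) := Real.sqrt_le_sqrt h2
      _ = Real.sqrt r * ‖x‖ := by
          rw [Real.sqrt_mul (by linarith) , Real.sqrt_sq (norm_nonneg x)]
  have hub2 : ‖T‖^2 ≤ r := by
    have := pow_le_pow_left₀ (norm_nonneg T) hub 2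
    rwa [Real.sq_sqrt (by linarith : (0:ℝ) ≤ r)] at this
  -- lower bound via eigenvector
  set w : EuclideanSpace ℝ (Fin 9) := (WithLp.equiv 2 (Fin 9 → ℝ)).symm
    ![r, r-1, r^2-3*r+1, 3*r^2-12*r+4, 2*r^2-8*r+2, 3*r^2-12*r+4, r^2-3*r+1, r-1, r] with hw
  have hV : (0:ℝ) < 16 - 68*r + 114*r^2 - 48*r^3 + 6*r^4 := by
    nlinarith [sq_nonneg (r-1), sq_nonneg (r^2-4*r+2), sq_nonneg (2*r^2-8*r+2)]
  have hwn : ‖w‖^2 = r * (16 - 68*r + 114*r^2 - 48*r^3 + 6*r^4) := by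
    rw [quipu_normsq]
    simp [hw, Fin.sum_univ_succ]
    linear_combination ((-8) + 24*r - 6*r^2) * hcub
  have hNwn : ‖T w‖^2 = r^2 * (16 - 68*r + 114*r^2 - 48*r^3 + 6*r^4) := by
    rw [quipu_normsq]
    simp [hw, hTdef, Matrix.toEuclideanLin_apply, Matrix.mulVec, dotProduct,
      Fin.sum_univ_succ]
    linear_combination ((-30) + 86*r - 6*r^3) * hcub
  have hlb : r ≤ ‖T‖^2 := by
    have hle : ‖T w‖ ≤ ‖T‖ * ‖w‖ := T.le_opNorm w
    have hsq : ‖T w‖^2 ≤ (‖T‖ * ‖w‖)^2 := pow_le_pow_left₀ (norm_nonneg _) hle 2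
    rw [hNwn, mul_pow, hwn] at hsq
    have hrV : (0:ℝ) < r * (16 - 68*r + 114*r^2 - 48*r^3 + 6*r^4) :=
      mul_pos (by linarith) hV
    nlinarith [hsq, hrV]
  have ht : t = r := by
    rw [hT]
    exact le_antisymm hub2 hlb
  refine ⟨by rw [ht]; linarith [hcub], by rw [ht]; exact h4, by rw [ht]; exact h5, ?_⟩
  intro s hs hs4 hs5
  rw [ht]
  have hfac : (s - r) * (s^2 + s*r + r^2 - 8*(s+r) + 17) = 0 := by
    linear_combination hs - hcub
  have hpos : 0 < s^2 + s*r + r^2 - 8*(s+r) + 17 := by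
    nlinarith [mul_pos (by linarith : (0:ℝ) < s - 4) (by linarith : (0:ℝ) < r - 4),
      sq_nonneg (s-4), sq_nonneg (r-4)]
  rcases mul_eq_zero.mp hfac with h | h
  · linarith
  · linarith
end

section
/- Let t be a real number with t ≠ 0 and t³ = 8t² − 17t + 5, and let G be the 7×9 quipu biadjacency matrix with rows (1,0,0,0,0,0,0,0,0), (1,1,1,0,0,0,0,0,0), (0,0,1,1,0,0,0,0,0), (0,0,0,1,1,1,0,0,0), (0,0,0,0,0,1,1,0,0), (0,0,0,0,0,0,1,1,1), (0,0,0,0,0,0,0,0,1). Define v ∈ ℝ⁷ by v = ((t³−7t²+13t−5)/(2t), (t²−5t+4)/2, (t−3)/2, 1, (t−3)/2, (t²−5t+4)/2, (t³−7t²+13t−5)/(2t)). Then G·Gᵀ·v = t·v. Moreover, if 4 < t < 5 then every entry of v is strictly positive, so v is a Perron–Frobenius eigenvector of G·Gᵀ. -/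
open Matrix

set_option maxHeartbeats 1000000

private theorem vecCons_congr {α : Type*} {n : ℕ} {a b : α} {u w : Fin n → α}
    (h1 : a = b) (h2 : u = w) : Matrix.vecCons a u = Matrix.vecCons b w := by rw [h1, h2]

/-- For `t ≠ 0` with `t³ = 8t² − 17t + 5` and `G` the quipu biadjacency matrix,
the vector
`v = ((t³−7t²+13t−5)/(2t), (t²−5t+4)/2, (t−3)/2, 1, (t−3)/2, (t²−5t+4)/2, (t³−7t²+13t−5)/(2t))`
satisfies `G·Gᵀ·v = t·v`; moreover if `4 < t < 5` then every entry of `v` is strictly positive,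
so `v` is a Perron–Frobenius eigenvector of `G·Gᵀ`. -/
theorem quipu_perron_frobenius_eigenvector (t : ℝ) (ht : t ≠ 0)
    (hcubic : t ^ 3 = 8 * t ^ 2 - 17 * t + 5) :
    let G : Matrix (Fin 7) (Fin 9) ℝ :=
      !![1,0,0,0,0,0,0,0,0;
         1,1,1,0,0,0,0,0,0;
         0,0,1,1,0,0,0,0,0;
         0,0,0,1,1,1,0,0,0;
         0,0,0,0,0,1,1,0,0;
         0,0,0,0,0,0,1,1,1;
         0,0,0,0,0,0,0,0,1]
    let v : Fin 7 → ℝ :=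
      ![(t ^ 3 - 7 * t ^ 2 + 13 * t - 5) / (2 * t),
        (t ^ 2 - 5 * t + 4) / 2,
        (t - 3) / 2,
        1,
        (t - 3) / 2,
        (t ^ 2 - 5 * t + 4) / 2,
        (t ^ 3 - 7 * t ^ 2 + 13 * t - 5) / (2 * t)]
    (G * Gᵀ) *ᵥ v = t • v ∧ (4 < t → t < 5 → ∀ i, 0 < v i) := by
  intro G v
  have hnum : t ^ 3 - 7 * t ^ 2 + 13 * t - 5 = t ^ 2 - 4 * t := by nlinarith [hcubic]
  constructor
  · have hGT : Gᵀ = !![1,1,0,0,0,0,0;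
                       0,1,0,0,0,0,0;
                       0,1,1,0,0,0,0;
                       0,0,1,1,0,0,0;
                       0,0,0,1,0,0,0;
                       0,0,0,1,1,0,0;
                       0,0,0,0,1,1,0;
                       0,0,0,0,0,1,0;
                       0,0,0,0,0,1,1] := by
      ext i j
      fin_cases i <;> fin_cases j <;> rfl
    have hA : True := trivial
    have hw : Gᵀ *ᵥ v = ![(t ^ 3 - 7 * t ^ 2 + 13 * t - 5) / (2 * t) + (t ^ 2 - 5 * t + 4) / 2, (t ^ 2 - 5 * t + 4) / 2, (t ^ 2 - 5 * t + 4) / 2 + (t - 3) / 2, (t - 3) / 2 + 1, 1, 1 + (t - 3) / 2, (t - 3) / 2 + (t ^ 2 - 5 * t + 4) / 2, (t ^ 2 - 5 * t + 4) / 2, (t ^ 2 - 5 * t + 4) / 2 + (t ^ 3 - 7 * t ^ 2 + 13 * t - 5) / (2 * t)] := by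
      rw [hGT]
      simp only [v, Matrix.cons_mulVec, Matrix.empty_mulVec, Matrix.cons_dotProduct,
        dotProduct_of_isEmpty, Matrix.head_cons, Matrix.tail_cons]
      refine vecCons_congr (by ring) (vecCons_congr (by ring) (vecCons_congr (by ring)
        (vecCons_congr (by ring) (vecCons_congr (by ring) (vecCons_congr (by ring)
        (vecCons_congr (by ring) (vecCons_congr (by ring) (vecCons_congr (by ring) rfl))))))))
    rw [← Matrix.mulVec_mulVec, hw]
    show (!![1,0,0,0,0,0,0,0,0;
         1,1,1,0,0,0,0,0,0;
         0,0,1,1,0,0,0,0,0;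
         0,0,0,1,1,1,0,0,0;
         0,0,0,0,0,1,1,0,0;
         0,0,0,0,0,0,1,1,1;
         0,0,0,0,0,0,0,0,1] : Matrix (Fin 7) (Fin 9) ℝ) *ᵥ
      ![(t ^ 3 - 7 * t ^ 2 + 13 * t - 5) / (2 * t) + (t ^ 2 - 5 * t + 4) / 2, (t ^ 2 - 5 * t + 4) / 2, (t ^ 2 - 5 * t + 4) / 2 + (t - 3) / 2, (t - 3) / 2 + 1, 1, 1 + (t - 3) / 2, (t - 3) / 2 + (t ^ 2 - 5 * t + 4) / 2, (t ^ 2 - 5 * t + 4) / 2, (t ^ 2 - 5 * t + 4) / 2 + (t ^ 3 - 7 * t ^ 2 + 13 * t - 5) / (2 * t)] = t • ![(t ^ 3 - 7 * t ^ 2 + 13 * t - 5) / (2 * t), (t ^ 2 - 5 * t + 4) / 2, (t - 3) / 2, 1, (t - 3) / 2, (t ^ 2 - 5 * t + 4) / 2, (t ^ 3 - 7 * t ^ 2 + 13 * t - 5) / (2 * t)]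
    simp only [Matrix.cons_mulVec, Matrix.empty_mulVec, Matrix.cons_dotProduct,
      dotProduct_of_isEmpty, Matrix.head_cons, Matrix.tail_cons, Matrix.smul_cons, Matrix.smul_empty, smul_eq_mul]
    have e1 : (t ^ 3 - 7 * t ^ 2 + 13 * t - 5) / (2 * t) + (t ^ 2 - 5 * t + 4) / 2 = t * ((t ^ 3 - 7 * t ^ 2 + 13 * t - 5) / (2 * t)) := by
      field_simp
      linear_combination (1-t) * hcubic
    have e2 : ((t ^ 3 - 7 * t ^ 2 + 13 * t - 5) / (2 * t) + (t ^ 2 - 5 * t + 4) / 2) + (t ^ 2 - 5 * t + 4) / 2 + ((t ^ 2 - 5 * t + 4) / 2 + (t - 3) / 2) = t * ((t ^ 2 - 5 * t + 4) / 2) := by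
      field_simp
      linear_combination (1-t) * hcubic
    have e3 : ((t ^ 2 - 5 * t + 4) / 2 + (t - 3) / 2) + ((t - 3) / 2 + 1) = t * (((t - 3) / 2) : ℝ) := by
      ring
    have e4 : ((t - 3) / 2 + 1) + 1 + (1 + (t - 3) / 2) = t * (1:ℝ) := by
      ring
    refine vecCons_congr (by linarith [e1]) (vecCons_congr (by linarith [e2])
      (vecCons_congr (by linarith [e3]) (vecCons_congr (by linarith [e4])
      (vecCons_congr (by linarith [e3]) (vecCons_congr (by linarith [e2])
      (vecCons_congr (by linarith [e1]) rfl))))))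
  · intro h4 h5 i
    have h0 : (0:ℝ) < t := by linarith
    have hfirst : (t ^ 3 - 7 * t ^ 2 + 13 * t - 5) / (2 * t) = (t - 4) / 2 := by
      rw [hnum]; field_simp
    have hA : (0:ℝ) < (t ^ 3 - 7 * t ^ 2 + 13 * t - 5) / (2 * t) := by
      rw [hfirst]; linarith
    have hB : (0:ℝ) < (t ^ 2 - 5 * t + 4) / 2 := by nlinarith
    have hC : (0:ℝ) < (t - 3) / 2 := by linarith
    fin_cases i
    · exact hA
    · exact hB
    · exact hC
    · exact one_pos
    · exact hC
    · exact hB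
    · exact hA
end

section
/- Let d = √17 and let W be the 3×3 real matrix with rows r₁ = (√((19d−75)/32), √((23+d)/32), (5−d)/4), r₂ = ((3−d)/2, 0, √((3d−11)/2)), r₃ = (−√((29d−101)/32), (d−1)/8, −√((31−7d)/8)). Then W is an orthogonal matrix, i.e. W·Wᵀ = I₃ (equivalently, the rows of W form an orthonormal basis of ℝ³). -/
open Matrix Real

set_option maxHeartbeats 1000000

private lemma sqrt_scale (c x : ℝ) (hc : 0 ≤ c) : c * Real.sqrt x = Real.sqrt (c^2 * x) := by
  rw [Real.sqrt_mul (sq_nonneg c), Real.sqrt_sq hc]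

private lemma sqrt_mul_eq (x y z : ℝ) (hx : 0 ≤ x) (hz : 0 ≤ z) (h : x * y = z^2) :
    Real.sqrt x * Real.sqrt y = z := by
  rw [← Real.sqrt_mul hx, h, Real.sqrt_sq hz]

/-- The `3×3` block `u^{(A₂,a₄)}` of the bi-unitary connection on the large double
broom (with `d = √17`) is an orthogonal matrix: `W · Wᵀ = 1`. -/
theorem largeDoubleBroom_block_u_A2_a4_orthogonal (d : ℝ) (hd : d = Real.sqrt 17)
    (W : Matrix (Fin 3) (Fin 3) ℝ)
    (hW : W = !![Real.sqrt ((19*d - 75)/32), Real.sqrt ((23 + d)/32), (5 - d)/4;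
                 (3 - d)/2, 0, Real.sqrt ((3*d - 11)/2);
                 -Real.sqrt ((29*d - 101)/32), (d - 1)/8, -Real.sqrt ((31 - 7*d)/8)]) :
    W * Wᵀ = 1 := by
  subst hW
  have hd0 : 0 ≤ d := hd ▸ Real.sqrt_nonneg 17
  have hd2 : d^2 = 17 := by rw [hd]; exact Real.sq_sqrt (by norm_num)
  have hlb : 4.1 ≤ d := by nlinarith
  have hd3 : d^3 = 17*d := by linear_combination d * hd2
  have hub : d ≤ 4.2 := by nlinarith
  have hA : (0:ℝ) ≤ (19*d - 75)/32 := by nlinarith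
  have hB : (0:ℝ) ≤ (23 + d)/32 := by nlinarith
  have hC : (0:ℝ) ≤ (3*d - 11)/2 := by nlinarith
  have hD : (0:ℝ) ≤ (29*d - 101)/32 := by nlinarith
  have hE : (0:ℝ) ≤ (31 - 7*d)/8 := by nlinarith
  have sA := Real.sq_sqrt hA
  have sB := Real.sq_sqrt hB
  have sC := Real.sq_sqrt hC
  have sD := Real.sq_sqrt hD
  have sE := Real.sq_sqrt hE
  -- product identities
  have hBE : Real.sqrt ((23 + d)/32) * Real.sqrt ((31 - 7*d)/8) = (5*d - 13)/16 :=
    sqrt_mul_eq _ _ _ hB (by nlinarith) (by linear_combination (-1/8 : ℝ) * hd2)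
  -- row1 ⬝ row2 = 0
  have hCA : (5 - d)/4 * Real.sqrt ((3*d - 11)/2) = (d - 3)/2 * Real.sqrt ((19*d - 75)/32) := by
    rw [sqrt_scale _ _ (by nlinarith : (0:ℝ) ≤ (5 - d)/4),
        sqrt_scale _ _ (by nlinarith : (0:ℝ) ≤ (d - 3)/2)]
    congr 1
    linear_combination ((-7*d + 25)/128 : ℝ) * hd2
  -- row2 ⬝ row3 = 0
  have hCE : Real.sqrt ((3*d - 11)/2) * Real.sqrt ((31 - 7*d)/8)
      = (d - 3)/2 * Real.sqrt ((29*d - 101)/32) := by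
    rw [sqrt_scale _ _ (by nlinarith : (0:ℝ) ≤ (d - 3)/2), ← Real.sqrt_mul hC]
    congr 1
    linear_combination ((-29*d + 107)/128 : ℝ) * hd2
  -- row1 ⬝ row3 = 0
  have hR0 : (5 - d)/4 * Real.sqrt ((31 - 7*d)/8) ≤ (d - 1)/8 * Real.sqrt ((23 + d)/32) := by
    rw [sqrt_scale _ _ (by nlinarith : (0:ℝ) ≤ (5 - d)/4),
        sqrt_scale _ _ (by nlinarith : (0:ℝ) ≤ (d - 1)/8)]
    exact Real.sqrt_le_sqrt (by linarith [hd3, hd2, hlb])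
  have hAD : Real.sqrt ((19*d - 75)/32) * Real.sqrt ((29*d - 101)/32)
      = (d - 1)/8 * Real.sqrt ((23 + d)/32) - (5 - d)/4 * Real.sqrt ((31 - 7*d)/8) := by
    rw [← Real.sqrt_mul hA]
    rw [show (19*d - 75)/32 * ((29*d - 101)/32)
        = ((d - 1)/8 * Real.sqrt ((23 + d)/32) - (5 - d)/4 * Real.sqrt ((31 - 7*d)/8))^2 from by
      linear_combination (-((d - 1)/8)^2) * sB + (-((5 - d)/4)^2) * sE
        + ((d - 1) * (5 - d)/16 : ℝ) * hBE + ((71*d - 191)/2048 : ℝ) * hd2]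
    exact Real.sqrt_sq (by linarith)
  ext i j
  rw [show (!![Real.sqrt ((19*d - 75)/32), Real.sqrt ((23 + d)/32), (5 - d)/4;
                 (3 - d)/2, 0, Real.sqrt ((3*d - 11)/2);
                 -Real.sqrt ((29*d - 101)/32), (d - 1)/8, -Real.sqrt ((31 - 7*d)/8)])ᵀ
      = !![Real.sqrt ((19*d - 75)/32), (3 - d)/2, -Real.sqrt ((29*d - 101)/32);
           Real.sqrt ((23 + d)/32), 0, (d - 1)/8;
           (5 - d)/4, Real.sqrt ((3*d - 11)/2), -Real.sqrt ((31 - 7*d)/8)] from by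
        ext i j; fin_cases i <;> fin_cases j <;> rfl]
  fin_cases i <;> fin_cases j <;>
    simp [Matrix.mul_apply, Fin.sum_univ_three, Matrix.one_apply,
      -Real.sqrt_div, -Real.sqrt_div']
  · linear_combination sA + sB + (1/16 : ℝ) * hd2
  · linear_combination hCA
  · linear_combination -hAD
  · linear_combination hCA
  · linear_combination sC + (1/4 : ℝ) * hd2
  · linear_combination -hCE
  · linear_combination -hAD
  · linear_combination -hCE
  · linear_combination sD + sE + (1/64 : ℝ) * hd2
end

section
/- Let α₁, α₃, s, t be real numbers and let ξ, β be nonzero real numbers. Set w = exp(is) and z₃ = exp(it) in ℂ, and define z₁ = −(α₁(1+w) + α₃(z₃ − w·conj(z₃)))/(2ξ) and z₂ = −(α₁(1−w) + α₃(z₃ + w·conj(z₃)))/(2β). Then |z₁|² = (α₁² + α₃² + α₁²·cos(s) − α₃²·cos(s−2t))/(2ξ²) and |z₂|² = (α₁² + α₃² − α₁²·cos(s) + α₃²·cos(s−2t))/(2β²). -/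
/-- For the entries `z₁, z₂` of the candidate `4×4` unitary in the one-parameter
family of bi-unitary connections on the 4-stars `S(i,i,j,j)`, with `w = exp(is)`,
`z₃ = exp(it)`, one has
`|z₁|² = (α₁² + α₃² + α₁²·cos s − α₃²·cos(s−2t))/(2ξ²)` and
`|z₂|² = (α₁² + α₃² − α₁²·cos s + α₃²·cos(s−2t))/(2β²)`. -/
theorem fourStar_connection_entry_abs_sq (α₁ α₃ s t : ℝ) (ξ β : ℝ)
    (hξ : ξ ≠ 0) (hβ : β ≠ 0) (w z₃ z₁ z₂ : ℂ)
    (hw : w = Complex.exp (Complex.I * (s : ℂ)))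
    (hz₃ : z₃ = Complex.exp (Complex.I * (t : ℂ)))
    (hz₁ : z₁ = -((α₁ : ℂ) * (1 + w) + (α₃ : ℂ) * (z₃ - w * (starRingEnd ℂ) z₃)) /
      (2 * (ξ : ℂ)))
    (hz₂ : z₂ = -((α₁ : ℂ) * (1 - w) + (α₃ : ℂ) * (z₃ + w * (starRingEnd ℂ) z₃)) /
      (2 * (β : ℂ))) :
    ‖z₁‖ ^ 2 =
      (α₁ ^ 2 + α₃ ^ 2 + α₁ ^ 2 * Real.cos s - α₃ ^ 2 * Real.cos (s - 2 * t)) /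
        (2 * ξ ^ 2) ∧
    ‖z₂‖ ^ 2 =
      (α₁ ^ 2 + α₃ ^ 2 - α₁ ^ 2 * Real.cos s + α₃ ^ 2 * Real.cos (s - 2 * t)) /
        (2 * β ^ 2) := by
  have hw' : w = (Real.cos s : ℂ) + (Real.sin s : ℂ) * Complex.I := by
    rw [hw, mul_comm, Complex.exp_mul_I]; push_cast; ring
  have hz₃' : z₃ = (Real.cos t : ℂ) + (Real.sin t : ℂ) * Complex.I := by
    rw [hz₃, mul_comm, Complex.exp_mul_I]; push_cast; ring
  subst hz₁ hz₂ hw' hz₃'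
  have hc : Real.cos s ^ 2 + Real.sin s ^ 2 = 1 := by
    rw [add_comm]; exact Real.sin_sq_add_cos_sq s
  have hc' : Real.cos t ^ 2 + Real.sin t ^ 2 = 1 := by
    rw [add_comm]; exact Real.sin_sq_add_cos_sq t
  have hcos : Real.cos (s - 2*t) = Real.cos s * (Real.cos t ^ 2 - Real.sin t ^ 2)
      + Real.sin s * (2 * Real.sin t * Real.cos t) := by
    rw [Real.cos_sub, Real.cos_two_mul, Real.sin_two_mul]
    linear_combination Real.cos s * hc'
  constructor <;>
  · rw [← Complex.normSq_eq_norm_sq]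
    simp only [Complex.normSq_apply, Complex.div_re, Complex.div_im, Complex.normSq_apply,
      Complex.add_re, Complex.add_im, Complex.sub_re, Complex.sub_im, Complex.neg_re,
      Complex.neg_im, Complex.mul_re, Complex.mul_im, Complex.one_re, Complex.one_im,
      Complex.I_re, Complex.I_im, Complex.ofReal_re, Complex.ofReal_im, Complex.conj_re,
      Complex.conj_im, Complex.re_ofNat, Complex.im_ofNat]
    rw [hcos]
    field_simp
    first
    | linear_combination (ξ^4*(8*α₁^2 + 8*α₃^2*(Real.cos t^2+Real.sin t^2)
        - 16*α₁*α₃*Real.cos t)) * hc + (16*α₃^2*ξ^4) * hc'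
    | linear_combination (β^4*(8*α₁^2 + 8*α₃^2*(Real.cos t^2+Real.sin t^2)
        - 16*α₁*α₃*Real.cos t)) * hc + (16*α₃^2*β^4) * hc'
end

section
/- Let α₁, α₃, s, t be real numbers and let ξ, β be strictly positive real numbers with β² + ξ² = α₁² + α₃². Set w = exp(is) and z₃ = exp(it) in ℂ, and define z₁ = −(α₁(1+w) + α₃(z₃ − w·conj(z₃)))/(2ξ) and z₂ = −(α₁(1−w) + α₃(z₃ + w·conj(z₃)))/(2β). Then the following are equivalent: (i) |z₁| = 1; (ii) |z₂| = 1; (iii) β² = ξ² − α₁²·cos(s) + α₃²·cos(s−2t). -/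
lemma fourStar_aux1 (α₁ α₃ a b c d : ℝ) (hab : a^2 + b^2 = 1) (hcd : c^2 + d^2 = 1) :
    (α₁*(1+a) + α₃*(c - a*c - b*d))^2 + (α₁*b + α₃*(d - b*c + a*d))^2
      = 2*α₁^2*(1+a) + 2*α₃^2*(1 - (a*(c^2-d^2) + 2*b*c*d)) := by
  linear_combination (α₁^2 + α₃^2 - 2*α₁*α₃*c) * hab + α₃^2*(1+a^2+b^2) * hcd

lemma fourStar_aux2 (α₁ α₃ a b c d : ℝ) (hab : a^2 + b^2 = 1) (hcd : c^2 + d^2 = 1) :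
    (α₁*(1-a) + α₃*(c + a*c + b*d))^2 + (-(α₁*b) + α₃*(d + b*c - a*d))^2
      = 2*α₁^2*(1-a) + 2*α₃^2*(1 + (a*(c^2-d^2) + 2*b*c*d)) := by
  linear_combination (α₁^2 + α₃^2 - 2*α₁*α₃*c) * hab + α₃^2*(1+a^2+b^2) * hcd

/-- With `β, ξ > 0` and `β² + ξ² = α₁² + α₃²`, for the entries `z₁, z₂` of the
candidate `4×4` unitary on the 4-star `S(i,i,j,j)` the following are equivalent:
(i) `|z₁| = 1`; (ii) `|z₂| = 1`; (iii) `β² = ξ² − α₁²·cos s + α₃²·cos(s−2t)`. -/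
theorem fourStar_connection_unitarity_condition (α₁ α₃ s t : ℝ) (ξ β : ℝ)
    (hξ : 0 < ξ) (hβ : 0 < β) (hsum : β ^ 2 + ξ ^ 2 = α₁ ^ 2 + α₃ ^ 2)
    (w z₃ z₁ z₂ : ℂ)
    (hw : w = Complex.exp (Complex.I * (s : ℂ)))
    (hz₃ : z₃ = Complex.exp (Complex.I * (t : ℂ)))
    (hz₁ : z₁ = -((α₁ : ℂ) * (1 + w) + (α₃ : ℂ) * (z₃ - w * (starRingEnd ℂ) z₃)) /
      (2 * (ξ : ℂ)))
    (hz₂ : z₂ = -((α₁ : ℂ) * (1 - w) + (α₃ : ℂ) * (z₃ + w * (starRingEnd ℂ) z₃)) /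
      (2 * (β : ℂ))) :
    (‖z₁‖ = 1 ↔
      β ^ 2 = ξ ^ 2 - α₁ ^ 2 * Real.cos s + α₃ ^ 2 * Real.cos (s - 2 * t)) ∧
    (‖z₂‖ = 1 ↔
      β ^ 2 = ξ ^ 2 - α₁ ^ 2 * Real.cos s + α₃ ^ 2 * Real.cos (s - 2 * t)) := by
  set a := Real.cos s with ha
  set b := Real.sin s with hb
  set c := Real.cos t with hc
  set d := Real.sin t with hd
  have hab : a^2 + b^2 = 1 := by rw [ha, hb]; rw [add_comm]; exact Real.sin_sq_add_cos_sq s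
  have hcd : c^2 + d^2 = 1 := by rw [hc, hd]; rw [add_comm]; exact Real.sin_sq_add_cos_sq t
  have hw2 : w = (a : ℂ) + (b : ℂ) * Complex.I := by
    rw [hw, mul_comm, Complex.exp_mul_I, ha, hb, Complex.ofReal_cos, Complex.ofReal_sin]
  have hz₃2 : z₃ = (c : ℂ) + (d : ℂ) * Complex.I := by
    rw [hz₃, mul_comm, Complex.exp_mul_I, hc, hd, Complex.ofReal_cos, Complex.ofReal_sin]
  have hX : Real.cos (s - 2 * t) = a*(c^2-d^2) + 2*b*c*d := by
    rw [Real.cos_sub, Real.cos_two_mul, Real.sin_two_mul, ← ha, ← hb, ← hc, ← hd]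
    linear_combination a * hcd
  -- abs to normSq
  have habs : ∀ z : ℂ, ‖z‖ = 1 ↔ Complex.normSq z = 1 := by
    intro z
    constructor
    · intro h; rw [← Complex.sq_norm, h]; norm_num
    · intro h
      have h2 := Complex.sq_norm z
      have h3 := norm_nonneg z
      nlinarith
  have hN₁ : Complex.normSq (-((α₁ : ℂ) * (1 + w) + (α₃ : ℂ) * (z₃ - w * (starRingEnd ℂ) z₃)))
      = (α₁*(1+a) + α₃*(c - a*c - b*d))^2 + (α₁*b + α₃*(d - b*c + a*d))^2 := by
    rw [hw2, hz₃2]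
    simp [Complex.normSq_apply, Complex.mul_re, Complex.mul_im, Complex.add_re, Complex.add_im]
    ring
  have hN₂ : Complex.normSq (-((α₁ : ℂ) * (1 - w) + (α₃ : ℂ) * (z₃ + w * (starRingEnd ℂ) z₃)))
      = (α₁*(1-a) + α₃*(c + a*c + b*d))^2 + (-(α₁*b) + α₃*(d + b*c - a*d))^2 := by
    rw [hw2, hz₃2]
    simp [Complex.normSq_apply, Complex.mul_re, Complex.mul_im, Complex.add_re, Complex.add_im]
    ring
  have hden : ∀ r : ℝ, 0 < r → Complex.normSq (2 * (r : ℂ)) = 4 * r^2 := by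
    intro r hr
    have : (2 * (r : ℂ)) = ((2*r : ℝ) : ℂ) := by push_cast; ring
    rw [this, Complex.normSq_ofReal]; ring
  constructor
  · rw [habs, hz₁, Complex.normSq_div, hN₁, hden ξ hξ,
      fourStar_aux1 α₁ α₃ a b c d hab hcd, hX]
    have h4 : (4 : ℝ) * ξ^2 ≠ 0 := by positivity
    rw [div_eq_one_iff_eq h4]
    constructor <;> intro h
    · linear_combination h/2 + hsum
    · linear_combination 2*h - 2*hsum
  · rw [habs, hz₂, Complex.normSq_div, hN₂, hden β hβ,
      fourStar_aux2 α₁ α₃ a b c d hab hcd, hX]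
    have h4 : (4 : ℝ) * β^2 ≠ 0 := by positivity
    rw [div_eq_one_iff_eq h4]
    constructor <;> intro h
    · linear_combination -(h/2) - hsum
    · linear_combination -2*h - 2*hsum
end

section
/- Let α₁ be a real number and let α₃, ξ, β be strictly positive real numbers with β² + ξ² = α₁² + α₃², α₁² ≤ ξ² and α₁² ≤ β². For every real number s, define t = (1/2)·(s − arccos((β² − ξ² + α₁²·cos(s))/α₃²)), and set w = exp(is), z₃ = exp(it), z₁ = −(α₁(1+w) + α₃(z₃ − w·conj(z₃)))/(2ξ), z₂ = −(α₁(1−w) + α₃(z₃ + w·conj(z₃)))/(2β). Then ξ² − α₁²·cos(s) + α₃²·cos(s−2t) = β², and consequently |z₁| = |z₂| = 1. -/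
/-- For every parameter `s`, the choice
`t = (1/2)·(s − arccos((β² − ξ² + α₁²·cos s)/α₃²))` makes the candidate `4×4` connection matrix
on the 4-star `S(i,i,j,j)` unitary: one has
`ξ² − α₁²·cos s + α₃²·cos(s−2t) = β²`, and consequently `|z₁| = |z₂| = 1`. -/
theorem fourStar_one_parameter_family (α₁ : ℝ) (α₃ ξ β : ℝ)
    (hα₃ : 0 < α₃) (hξ : 0 < ξ) (hβ : 0 < β)
    (hsum : β ^ 2 + ξ ^ 2 = α₁ ^ 2 + α₃ ^ 2)
    (hξ' : α₁ ^ 2 ≤ ξ ^ 2) (hβ' : α₁ ^ 2 ≤ β ^ 2)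
    (s t : ℝ)
    (ht : t = (1/2) * (s -
      Real.arccos ((β ^ 2 - ξ ^ 2 + α₁ ^ 2 * Real.cos s) / α₃ ^ 2)))
    (w z₃ z₁ z₂ : ℂ)
    (hw : w = Complex.exp (Complex.I * (s : ℂ)))
    (hz₃ : z₃ = Complex.exp (Complex.I * (t : ℂ)))
    (hz₁ : z₁ = -((α₁ : ℂ) * (1 + w) + (α₃ : ℂ) * (z₃ - w * (starRingEnd ℂ) z₃)) /
      (2 * (ξ : ℂ)))
    (hz₂ : z₂ = -((α₁ : ℂ) * (1 - w) + (α₃ : ℂ) * (z₃ + w * (starRingEnd ℂ) z₃)) /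
      (2 * (β : ℂ))) :
    ξ ^ 2 - α₁ ^ 2 * Real.cos s + α₃ ^ 2 * Real.cos (s - 2 * t) = β ^ 2 ∧
    ‖z₁‖ = 1 ∧ ‖z₂‖ = 1 := by
  have hα₃2 : (0:ℝ) < α₃ ^ 2 := by positivity
  have hcs1 : -1 ≤ Real.cos s := Real.neg_one_le_cos s
  have hcs2 : Real.cos s ≤ 1 := Real.cos_le_one s
  set x : ℝ := (β ^ 2 - ξ ^ 2 + α₁ ^ 2 * Real.cos s) / α₃ ^ 2 with hx
  have hx1 : x ≤ 1 := by
    rw [hx, div_le_one hα₃2]; nlinarith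
  have hx2 : -1 ≤ x := by
    rw [hx, le_div_iff₀ hα₃2]; nlinarith
  have hst : s - 2 * t = Real.arccos x := by rw [ht]; ring
  have harc : Real.cos (s - 2 * t) = x := by rw [hst, Real.cos_arccos hx2 hx1]
  have key : ξ ^ 2 - α₁ ^ 2 * Real.cos s + α₃ ^ 2 * Real.cos (s - 2 * t) = β ^ 2 := by
    rw [harc, hx]; field_simp; ring
  -- trig identity
  have e : Real.cos (s - 2*t) = Real.cos s * (Real.cos t^2 - Real.sin t^2)
      + Real.sin s * (2*Real.sin t*Real.cos t) := by
    rw [Real.cos_sub, Real.cos_two_mul, Real.sin_two_mul]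
    linear_combination Real.cos s * Real.sin_sq_add_cos_sq t
  have K : α₃^2 * (Real.cos s * (Real.cos t^2 - Real.sin t^2)
      + Real.sin s * (2*Real.sin t*Real.cos t)) = β^2 - ξ^2 + α₁^2 * Real.cos s := by
    rw [← e]; linarith [key]
  -- complex versions
  have Kc : (α₃:ℂ)^2 * ((Real.cos s:ℂ) * ((Real.cos t:ℂ)^2 - (Real.sin t:ℂ)^2)
      + (Real.sin s:ℂ) * (2*(Real.sin t:ℂ)*(Real.cos t:ℂ)))
      = (β:ℂ)^2 - (ξ:ℂ)^2 + (α₁:ℂ)^2 * (Real.cos s:ℂ) := by exact_mod_cast K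
  have P1 : ((Real.sin s:ℂ))^2 + ((Real.cos s:ℂ))^2 = 1 := by
    exact_mod_cast Real.sin_sq_add_cos_sq s
  have P2 : ((Real.sin t:ℂ))^2 + ((Real.cos t:ℂ))^2 = 1 := by
    exact_mod_cast Real.sin_sq_add_cos_sq t
  have hsumc : (β:ℂ)^2 + (ξ:ℂ)^2 = (α₁:ℂ)^2 + (α₃:ℂ)^2 := by exact_mod_cast hsum
  have hI := Complex.I_sq
  have hw' : w = (Real.cos s : ℂ) + (Real.sin s : ℂ) * Complex.I := by
    rw [hw, mul_comm, Complex.exp_mul_I, ← Complex.ofReal_cos, ← Complex.ofReal_sin]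
  have hz₃' : z₃ = (Real.cos t : ℂ) + (Real.sin t : ℂ) * Complex.I := by
    rw [hz₃, mul_comm, Complex.exp_mul_I, ← Complex.ofReal_cos, ← Complex.ofReal_sin]
  have h2ξ : (2 * (ξ:ℂ)) ≠ 0 := by
    simp [Complex.ofReal_ne_zero.mpr hξ.ne']
  have h2β : (2 * (β:ℂ)) ≠ 0 := by
    simp [Complex.ofReal_ne_zero.mpr hβ.ne']
  refine ⟨key, ?_, ?_⟩
  · -- |z₁| = 1
    have hNN : (-((α₁ : ℂ) * (1 + w) + (α₃ : ℂ) * (z₃ - w * (starRingEnd ℂ) z₃))) *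
        (starRingEnd ℂ) (-((α₁ : ℂ) * (1 + w) + (α₃ : ℂ) * (z₃ - w * (starRingEnd ℂ) z₃)))
        = (2*(ξ:ℂ)) * (2*(ξ:ℂ)) := by
      rw [hw', hz₃']
      simp only [map_neg, map_add, map_sub, map_mul, map_one, Complex.conj_ofReal,
        Complex.conj_I]
      linear_combination (-2:ℂ) * Kc - 2 * hsumc
        + ((α₁:ℂ)^2 + (α₃:ℂ)^2 - 2*(α₁:ℂ)*(α₃:ℂ)*(Real.cos t:ℂ)) * P1
        + (α₃:ℂ)^2*(1+(Real.cos s:ℂ)^2+(Real.sin s:ℂ)^2) * P2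
        - ((α₁:ℂ)*(Real.sin s:ℂ) + (α₃:ℂ)*((Real.sin t:ℂ)
            - (Real.sin s:ℂ)*(Real.cos t:ℂ) + (Real.cos s:ℂ)*(Real.sin t:ℂ)))^2 * hI
        + (2*(α₁:ℂ)*(Real.cos s:ℂ)*(Real.sin s:ℂ)*(α₃:ℂ)*(Real.sin t:ℂ)
           + 2*(α₁:ℂ)*(Real.sin s:ℂ)*(α₃:ℂ)*(Real.sin t:ℂ)
           - 2*(Real.cos s:ℂ)*(Real.sin s:ℂ)*(α₃:ℂ)^2*(Real.cos t:ℂ)*(Real.sin t:ℂ)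
           + 2*(Real.sin s:ℂ)*(α₃:ℂ)^2*(Real.cos t:ℂ)*(Real.sin t:ℂ)
           + (Real.sin s:ℂ)^2*(α₃:ℂ)^2*(Real.sin t:ℂ)^2*(Complex.I^2-1)) * hI
    have hmc : z₁ * (starRingEnd ℂ) z₁ = 1 := by
      rw [hz₁, map_div₀, div_mul_div_comm, hNN]
      rw [map_mul]
      simp only [map_ofNat, Complex.conj_ofReal]
      exact div_self (mul_ne_zero h2ξ h2ξ)
    have hns : (Complex.normSq z₁ : ℂ) = 1 := by rw [← Complex.mul_conj, hmc]
    have hns' : Complex.normSq z₁ = 1 := by exact_mod_cast hns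
    rw [Complex.norm_def, hns', Real.sqrt_one]
  · -- |z₂| = 1
    have hNN : (-((α₁ : ℂ) * (1 - w) + (α₃ : ℂ) * (z₃ + w * (starRingEnd ℂ) z₃))) *
        (starRingEnd ℂ) (-((α₁ : ℂ) * (1 - w) + (α₃ : ℂ) * (z₃ + w * (starRingEnd ℂ) z₃)))
        = (2*(β:ℂ)) * (2*(β:ℂ)) := by
      rw [hw', hz₃']
      simp only [map_neg, map_add, map_sub, map_mul, map_one, Complex.conj_ofReal,
        Complex.conj_I]
      linear_combination (2:ℂ) * Kc - 2 * hsumc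
        + ((α₁:ℂ)^2 + (α₃:ℂ)^2 - 2*(α₁:ℂ)*(α₃:ℂ)*(Real.cos t:ℂ)) * P1
        + (α₃:ℂ)^2*(1+(Real.cos s:ℂ)^2+(Real.sin s:ℂ)^2) * P2
        - (-(α₁:ℂ)*(Real.sin s:ℂ) + (α₃:ℂ)*((Real.sin t:ℂ)
            + (Real.sin s:ℂ)*(Real.cos t:ℂ) - (Real.cos s:ℂ)*(Real.sin t:ℂ)))^2 * hI
        + (2*(α₁:ℂ)*(Real.cos s:ℂ)*(Real.sin s:ℂ)*(α₃:ℂ)*(Real.sin t:ℂ)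
           - 2*(α₁:ℂ)*(Real.sin s:ℂ)*(α₃:ℂ)*(Real.sin t:ℂ)
           - 2*(Real.cos s:ℂ)*(Real.sin s:ℂ)*(α₃:ℂ)^2*(Real.cos t:ℂ)*(Real.sin t:ℂ)
           - 2*(Real.sin s:ℂ)*(α₃:ℂ)^2*(Real.cos t:ℂ)*(Real.sin t:ℂ)
           + (Real.sin s:ℂ)^2*(α₃:ℂ)^2*(Real.sin t:ℂ)^2*(Complex.I^2-1)) * hI
    have hmc : z₂ * (starRingEnd ℂ) z₂ = 1 := by
      rw [hz₂, map_div₀, div_mul_div_comm, hNN]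
      rw [map_mul]
      simp only [map_ofNat, Complex.conj_ofReal]
      exact div_self (mul_ne_zero h2β h2β)
    have hns : (Complex.normSq z₂ : ℂ) = 1 := by rw [← Complex.mul_conj, hmc]
    have hns' : Complex.normSq z₂ = 1 := by exact_mod_cast hns
    rw [Complex.norm_def, hns', Real.sqrt_one]
end

section
/- Let G be the 5×8 matrix with nonnegative integer entries and rows (1,0,1,0,1,0,1,0), (1,1,0,0,0,0,0,0), (0,0,1,1,0,0,0,0), (0,0,0,0,1,1,0,0), (0,0,0,0,0,0,1,1) (the biadjacency matrix of the 4-star S(3,3,3,3)). Then for every positive integer q and all matrices H (5×q) and K (q×8) with nonnegative integer entries such that G = H·K and such that every row and every column of H contains a nonzero entry and every row and every column of K contains a nonzero entry, the operator norm of H as a linear map from ℝ^q to ℝ⁵ with Euclidean norms (equivalently, the largest singular value of H) satisfies ‖H‖² ≠ (3+√5)/2. -/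
open Matrix

private def Gmat : Matrix (Fin 5) (Fin 8) ℕ :=
  !![1,0,1,0,1,0,1,0;
     1,1,0,0,0,0,0,0;
     0,0,1,1,0,0,0,0;
     0,0,0,0,1,1,0,0;
     0,0,0,0,0,0,1,1]

private lemma norm_sq_euclid {n : ℕ} (x : EuclideanSpace ℝ (Fin n)) :
    ‖x‖^2 = ∑ i, (x i)^2 := by
  rw [EuclideanSpace.norm_eq, Real.sq_sqrt (by positivity)]
  simp [sq_abs]

private lemma mulVec_sq_le {m n : ℕ} (A : Matrix (Fin m) (Fin n) ℝ) (x : Fin n → ℝ) :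
    ∑ i, (A.mulVec x i)^2 ≤ (euclideanOpNorm A)^2 * ∑ j, (x j)^2 := by
  set L := (Matrix.toEuclideanLin.trans LinearMap.toContinuousLinearMap) A with hL
  set y : EuclideanSpace ℝ (Fin n) := WithLp.toLp 2 x with hy
  have h := L.le_opNorm y
  have h2 : ‖L y‖^2 ≤ ‖L‖^2 * ‖y‖^2 := by
    rw [← mul_pow]; exact pow_le_pow_left₀ (norm_nonneg _) h 2
  rw [norm_sq_euclid, norm_sq_euclid] at h2
  have hLx : ∀ i, L y i = A.mulVec x i := fun i => rfl
  have hyx : ∀ j, y j = x j := fun j => rfl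
  calc ∑ i, (A.mulVec x i)^2 = ∑ i, (L y i)^2 := by simp [hLx]
    _ ≤ ‖L‖^2 * ∑ j, (y j)^2 := h2
    _ = (euclideanOpNorm A)^2 * ∑ j, (x j)^2 := by simp [hyx, euclideanOpNorm, hL]

private lemma opNorm_sq_le {m n : ℕ} (A : Matrix (Fin m) (Fin n) ℝ) (c : ℝ) (hc : 0 ≤ c)
    (h : ∀ x : Fin n → ℝ, ∑ i, (A.mulVec x i)^2 ≤ c * ∑ j, (x j)^2) :
    (euclideanOpNorm A)^2 ≤ c := by
  set L := (Matrix.toEuclideanLin.trans LinearMap.toContinuousLinearMap) A with hL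
  have hb : ‖L‖ ≤ Real.sqrt c := by
    apply L.opNorm_le_bound (Real.sqrt_nonneg c)
    intro x
    have h1 : ‖L x‖^2 ≤ (Real.sqrt c * ‖x‖)^2 := by
      rw [mul_pow, Real.sq_sqrt hc, norm_sq_euclid, norm_sq_euclid]
      have hLx : ∀ i, L x i = A.mulVec (fun j => x j) i := fun i => rfl
      calc ∑ i, (L x i)^2 = ∑ i, (A.mulVec (fun j => x j) i)^2 := by simp [hLx]
        _ ≤ c * ∑ j, (x j)^2 := h (fun j => x j)
    have := Real.sqrt_le_sqrt h1
    rwa [Real.sqrt_sq (norm_nonneg _), Real.sqrt_sq (by positivity)] at this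
  calc ‖L‖^2 ≤ (Real.sqrt c)^2 := pow_le_pow_left₀ (norm_nonneg _) hb 2
    _ = c := Real.sq_sqrt hc

private lemma sum_support_two {n : ℕ} {a b : Fin n} (hab : a ≠ b) (g : Fin n → ℝ)
    (hg : ∀ j, j ≠ a → j ≠ b → g j = 0) : ∑ j, g j = g a + g b := by
  have h1 : ∑ j ∈ ({a, b} : Finset (Fin n)), g j = ∑ j, g j := by
    apply Finset.sum_subset (Finset.subset_univ _)
    intro x _ hx
    simp only [Finset.mem_insert, Finset.mem_singleton, not_or] at hx
    exact hg x hx.1 hx.2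
  rw [← h1, Finset.sum_insert (by simp [hab]), Finset.sum_singleton]

private lemma sum_support_three {n : ℕ} {a b c : Fin n} (hab : a ≠ b) (hac : a ≠ c)
    (hbc : b ≠ c) (g : Fin n → ℝ)
    (hg : ∀ j, j ≠ a → j ≠ b → j ≠ c → g j = 0) : ∑ j, g j = g a + g b + g c := by
  have h1 : ∑ j ∈ ({a, b, c} : Finset (Fin n)), g j = ∑ j, g j := by
    apply Finset.sum_subset (Finset.subset_univ _)
    intro x _ hx
    simp only [Finset.mem_insert, Finset.mem_singleton, not_or] at hx
    exact hg x hx.1 hx.2.1 hx.2.2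
  rw [← h1, Finset.sum_insert (by simp [hab, hac]),
    Finset.sum_insert (by simp [hbc]), Finset.sum_singleton, add_assoc]

private lemma sum_support_four {n : ℕ} {a b c d : Fin n} (hab : a ≠ b) (hac : a ≠ c)
    (had : a ≠ d) (hbc : b ≠ c) (hbd : b ≠ d) (hcd : c ≠ d) (g : Fin n → ℝ)
    (hg : ∀ j, j ≠ a → j ≠ b → j ≠ c → j ≠ d → g j = 0) :
    ∑ j, g j = g a + g b + g c + g d := by
  have h1 : ∑ j ∈ ({a, b, c, d} : Finset (Fin n)), g j = ∑ j, g j := by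
    apply Finset.sum_subset (Finset.subset_univ _)
    intro x _ hx
    simp only [Finset.mem_insert, Finset.mem_singleton, not_or] at hx
    exact hg x hx.1 hx.2.1 hx.2.2.1 hx.2.2.2
  rw [← h1, Finset.sum_insert (by simp [hab, hac, had]),
    Finset.sum_insert (by simp [hbc, hbd]), Finset.sum_insert (by simp [hcd]),
    Finset.sum_singleton]
  ring

/-- In any ℕ-factorization of `Gmat`, for every `t ≠ 0` there is a column of `H`
equal to the standard basis vector `e t`. -/
private lemma exists_col_et {q : ℕ} (H : Matrix (Fin 5) (Fin q) ℕ)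
    (K : Matrix (Fin q) (Fin 8) ℕ)
    (hent : ∀ i j, Gmat i j = ∑ k, H i k * K k j)
    (hP1 : ∀ i k j, H i k ≠ 0 → K k j ≠ 0 → Gmat i j ≠ 0)
    (hP2 : ∀ i k, H i k ≤ 1)
    (t : Fin 5) (ht : t ≠ 0) :
    ∃ k'', H t k'' = 1 ∧ ∀ u, u ≠ t → H u k'' = 0 := by
  have hj : ∀ t : Fin 5, t ≠ 0 → ∃ j, Gmat t j ≠ 0 ∧ ∀ u, u ≠ t → Gmat u j = 0 := by
    intro t; fin_cases t <;> decide
  obtain ⟨j₁, hj₁, hju⟩ := hj t ht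
  rw [hent t j₁] at hj₁
  obtain ⟨k'', -, hk''⟩ := Finset.exists_ne_zero_of_sum_ne_zero hj₁
  have hH : H t k'' ≠ 0 := fun h => hk'' (by simp [h])
  have hK : K k'' j₁ ≠ 0 := fun h => hk'' (by simp [h])
  refine ⟨k'', le_antisymm (hP2 t k'') (Nat.one_le_iff_ne_zero.2 hH), fun u hu => ?_⟩
  by_contra h
  exact (hP1 u k'' j₁ h hK) (hju u hu)

/-- For the biadjacency matrix `G` of the 4-star `S(3,3,3,3)`, in every
factorization `G = H·K` over `ℕ` with both factors biadjacency matrices of bipartite graphs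
without isolated vertices (every row and column of `H` and of `K` contains a nonzero entry),
the Euclidean operator norm of `H` satisfies `‖H‖² ≠ (3+√5)/2`. -/
theorem fourStar3333_no_intermediate_factorization :
    let G : Matrix (Fin 5) (Fin 8) ℕ :=
      !![1,0,1,0,1,0,1,0;
         1,1,0,0,0,0,0,0;
         0,0,1,1,0,0,0,0;
         0,0,0,0,1,1,0,0;
         0,0,0,0,0,0,1,1]
    ∀ (q : ℕ), 0 < q →
      ∀ (H : Matrix (Fin 5) (Fin q) ℕ) (K : Matrix (Fin q) (Fin 8) ℕ),
        G = H * K →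
        (∀ i : Fin 5, ∃ k : Fin q, H i k ≠ 0) →
        (∀ k : Fin q, ∃ i : Fin 5, H i k ≠ 0) →
        (∀ k : Fin q, ∃ j : Fin 8, K k j ≠ 0) →
        (∀ j : Fin 8, ∃ k : Fin q, K k j ≠ 0) →
        (euclideanOpNorm (H.map (fun a : ℕ => (a : ℝ)))) ^ 2 ≠ (3 + Real.sqrt 5) / 2 := by
  intro G q hq H K hGK hHrow hHcol hKrow hKcol
  have hGdef : G = Gmat := rfl
  rw [hGdef] at hGK
  have hent : ∀ i j, Gmat i j = ∑ k, H i k * K k j := by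
    intro i j; rw [hGK, Matrix.mul_apply]
  have hP1 : ∀ i k j, H i k ≠ 0 → K k j ≠ 0 → Gmat i j ≠ 0 := by
    intro i k j hH hK
    have hle : H i k * K k j ≤ Gmat i j := by
      rw [hent]
      exact Finset.single_le_sum (f := fun k' => H i k' * K k' j) (fun _ _ => Nat.zero_le _) (Finset.mem_univ k)
    have hne : H i k * K k j ≠ 0 := Nat.mul_ne_zero hH hK
    omega
  have hGle : ∀ i j, Gmat i j ≤ 1 := by intro i; fin_cases i <;> decide
  have hP2 : ∀ i k, H i k ≤ 1 := by
    intro i k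
    obtain ⟨j, hj⟩ := hKrow k
    have hle : H i k * K k j ≤ Gmat i j := by
      rw [hent]
      exact Finset.single_le_sum (f := fun k' => H i k' * K k' j) (fun _ _ => Nat.zero_le _) (Finset.mem_univ k)
    have h1 := hGle i j
    have h2 : H i k ≤ H i k * K k j := Nat.le_mul_of_pos_right _ (Nat.pos_of_ne_zero hj)
    omega
  have hG2 : ∀ i i' j : _, i ≠ i' → Gmat i j ≠ 0 → Gmat i' j ≠ 0 → i = 0 ∨ i' = 0 := by
    intro i i'; fin_cases i <;> fin_cases i' <;> decide
  have hcolsup : ∀ k i i', i ≠ i' → H i k ≠ 0 → H i' k ≠ 0 → i = 0 ∨ i' = 0 := by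
    intro k i i' hne hi hi'
    obtain ⟨j, hj⟩ := hKrow k
    exact hG2 i i' j hne (hP1 i k j hi hj) (hP1 i' k j hi' hj)
  set A : Matrix (Fin 5) (Fin q) ℝ := H.map (fun a : ℕ => (a : ℝ)) with hA
  have hAval : ∀ i k, A i k = (H i k : ℝ) := fun i k => rfl
  have hmvdef : ∀ (x : Fin q → ℝ) i, A.mulVec x i = ∑ j, A i j * x j := fun x i => rfl
  intro heq
  have hs5 : Real.sqrt 5 ^ 2 = 5 := Real.sq_sqrt (by norm_num)
  have hs5n : 0 ≤ Real.sqrt 5 := Real.sqrt_nonneg 5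
  by_cases hpair : ∃ (kk : Fin q) (t : Fin 5), t ≠ 0 ∧ H 0 kk ≠ 0 ∧ H t kk ≠ 0
  · -- there is a "pair" column
    obtain ⟨k, t, ht0, h0k, htk⟩ := hpair
    have hcolk : ∀ u, u ≠ 0 → u ≠ t → H u k = 0 := by
      intro u hu0 hut
      by_contra h
      rcases hcolsup k u t hut h htk with h1 | h1
      · exact hu0 h1
      · exact ht0 h1
    have h0k1 : H 0 k = 1 := le_antisymm (hP2 0 k) (Nat.one_le_iff_ne_zero.2 h0k)
    have htk1 : H t k = 1 := le_antisymm (hP2 t k) (Nat.one_le_iff_ne_zero.2 htk)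
    obtain ⟨k2, hk2t, hk2u⟩ := exists_col_et H K hent hP1 hP2 t ht0
    have hj2 : ∃ j, Gmat 0 j ≠ 0 ∧ Gmat t j = 0 := by
      have h : ∀ t : Fin 5, t ≠ 0 → ∃ j, Gmat 0 j ≠ 0 ∧ Gmat t j = 0 := by
        intro t; fin_cases t <;> decide
      exact h t ht0
    obtain ⟨j₂, hj₂0, hj₂t⟩ := hj2
    rw [hent 0 j₂] at hj₂0
    obtain ⟨k1, -, hk1ne⟩ := Finset.exists_ne_zero_of_sum_ne_zero hj₂0
    have hk1H : H 0 k1 ≠ 0 := fun h => hk1ne (by simp [h])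
    have hk1K : K k1 j₂ ≠ 0 := fun h => hk1ne (by simp [h])
    have hk1t : H t k1 = 0 := by
      by_contra h
      exact (hP1 t k1 j₂ h hk1K) hj₂t
    have h0k1' : H 0 k1 = 1 := le_antisymm (hP2 0 k1) (Nat.one_le_iff_ne_zero.2 hk1H)
    have hkk1 : k ≠ k1 := by
      intro h; rw [h] at htk1; rw [hk1t] at htk1; exact absurd htk1 (by norm_num)
    have hkk2 : k ≠ k2 := by
      intro h; rw [h] at h0k1
      rw [hk2u 0 (Ne.symm ht0)] at h0k1; exact absurd h0k1 (by norm_num)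
    have hk1k2 : k1 ≠ k2 := by
      intro h; rw [h] at h0k1'
      rw [hk2u 0 (Ne.symm ht0)] at h0k1'; exact absurd h0k1' (by norm_num)
    by_cases hsing : ∀ u, u ≠ 0 → H u k1 = 0
    · -- columns k = e0 + et, k1 = e0, k2 = et
      set x : Fin q → ℝ := fun j => if j = k then 2 else if j = k1 then 1 else
        if j = k2 then 1 else 0 with hx
      have hxk : x k = 2 := by simp [hx]
      have hxk1 : x k1 = 1 := by simp [hx, Ne.symm hkk1]
      have hxk2 : x k2 = 1 := by simp [hx, Ne.symm hkk2, Ne.symm hk1k2]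
      have hxz : ∀ j, j ≠ k → j ≠ k1 → j ≠ k2 → x j = 0 := by
        intro j h1 h2 h3; simp [hx, h1, h2, h3]
      have hxs : ∑ j, (x j)^2 = 6 := by
        rw [sum_support_three hkk1 hkk2 hk1k2 _
          (fun j h1 h2 h3 => by rw [hxz j h1 h2 h3]; ring)]
        rw [hxk, hxk1, hxk2]; norm_num
      have hmv : ∀ i, A.mulVec x i = if i = 0 then 3 else if i = t then 3 else 0 := by
        intro i
        rw [hmvdef, sum_support_three hkk1 hkk2 hk1k2 _
          (fun j h1 h2 h3 => by rw [hxz j h1 h2 h3]; ring)]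
        rw [hxk, hxk1, hxk2]
        by_cases hi0 : i = 0
        · subst hi0
          rw [hAval, hAval, hAval, h0k1, h0k1', hk2u 0 (Ne.symm ht0)]
          norm_num
        · by_cases hit : i = t
          · subst hit
            rw [hAval, hAval, hAval, htk1, hk1t, hk2t]
            simp [hi0]
            norm_num
          · rw [hAval, hAval, hAval, hcolk i hi0 hit, hsing i hi0, hk2u i hit]
            simp [hi0, hit]
      have hS : ∑ i, (A.mulVec x i)^2 = 18 := by
        rw [sum_support_two (Ne.symm ht0) _
          (fun i h1 h2 => by rw [hmv]; simp [h1, h2])]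
        rw [hmv, hmv]; simp [ht0]; norm_num
      have hmain := mulVec_sq_le A x
      rw [hS, hxs, heq] at hmain
      nlinarith
    · -- columns k = e0+et, k1 = e0+es, k2 = et, k3 = es
      push_neg at hsing
      obtain ⟨s, hs0, hsk1⟩ := hsing
      have hst : s ≠ t := by
        intro h; rw [h] at hsk1; exact hsk1 hk1t
      have hcolk1 : ∀ u, u ≠ 0 → u ≠ s → H u k1 = 0 := by
        intro u hu0 hus
        by_contra h
        rcases hcolsup k1 u s hus h hsk1 with h1 | h1
        · exact hu0 h1
        · exact hs0 h1
      have hsk1' : H s k1 = 1 := le_antisymm (hP2 s k1) (Nat.one_le_iff_ne_zero.2 hsk1)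
      obtain ⟨k3, hk3s, hk3u⟩ := exists_col_et H K hent hP1 hP2 s hs0
      have hkk3 : k ≠ k3 := by
        intro h; rw [h] at h0k1
        rw [hk3u 0 (Ne.symm hs0)] at h0k1; exact absurd h0k1 (by norm_num)
      have hk1k3 : k1 ≠ k3 := by
        intro h; rw [h] at h0k1'
        rw [hk3u 0 (Ne.symm hs0)] at h0k1'; exact absurd h0k1' (by norm_num)
      have hk2k3 : k2 ≠ k3 := by
        intro h; rw [h] at hk2t
        rw [hk3u t (Ne.symm hst)] at hk2t; exact absurd hk2t (by norm_num)
      have hstk : H s k = 0 := hcolk s hs0 hst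
      have hsk2 : H s k2 = 0 := hk2u s hst
      have htk3 : H t k3 = 0 := hk3u t (Ne.symm hst)
      have htk1' : H t k1 = 0 := hk1t
      set x : Fin q → ℝ := fun j => if j = k then 1 else if j = k1 then 1 else
        if j = k2 then 1 else if j = k3 then 1 else 0 with hx
      have hxk : x k = 1 := by simp [hx]
      have hxk1 : x k1 = 1 := by simp [hx, Ne.symm hkk1]
      have hxk2 : x k2 = 1 := by simp [hx, Ne.symm hkk2, Ne.symm hk1k2]
      have hxk3 : x k3 = 1 := by simp [hx, Ne.symm hkk3, Ne.symm hk1k3, Ne.symm hk2k3]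
      have hxz : ∀ j, j ≠ k → j ≠ k1 → j ≠ k2 → j ≠ k3 → x j = 0 := by
        intro j h1 h2 h3 h4; simp [hx, h1, h2, h3, h4]
      have hxs : ∑ j, (x j)^2 = 4 := by
        rw [sum_support_four hkk1 hkk2 hkk3 hk1k2 hk1k3 hk2k3 _
          (fun j h1 h2 h3 h4 => by rw [hxz j h1 h2 h3 h4]; ring)]
        rw [hxk, hxk1, hxk2, hxk3]; norm_num
      have hmv : ∀ i, A.mulVec x i =
          if i = 0 then 2 else if i = t then 2 else if i = s then 2 else 0 := by
        intro i
        rw [hmvdef, sum_support_four hkk1 hkk2 hkk3 hk1k2 hk1k3 hk2k3 _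
          (fun j h1 h2 h3 h4 => by rw [hxz j h1 h2 h3 h4]; ring)]
        rw [hxk, hxk1, hxk2, hxk3]
        by_cases hi0 : i = 0
        · subst hi0
          rw [hAval, hAval, hAval, hAval, h0k1, h0k1', hk2u 0 (Ne.symm ht0),
            hk3u 0 (Ne.symm hs0)]
          norm_num
        · by_cases hit : i = t
          · subst hit
            rw [hAval, hAval, hAval, hAval, htk1, htk1', hk2t, htk3]
            simp [hi0]
            norm_num
          · by_cases his : i = s
            · subst his
              rw [hAval, hAval, hAval, hAval, hstk, hsk1', hsk2, hk3s]
              simp [hi0, hit]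
              norm_num
            · rw [hAval, hAval, hAval, hAval, hcolk i hi0 hit, hcolk1 i hi0 his,
                hk2u i hit, hk3u i his]
              simp [hi0, hit, his]
      have hS : ∑ i, (A.mulVec x i)^2 = 12 := by
        rw [sum_support_three (Ne.symm ht0) (Ne.symm hs0) (Ne.symm hst) _
          (fun i h1 h2 h3 => by rw [hmv]; simp [h1, h2, h3])]
        rw [hmv, hmv, hmv]; simp [ht0, hs0, hst]; norm_num
      have hmain := mulVec_sq_le A x
      rw [hS, hxs, heq] at hmain
      nlinarith
  · -- no pair column: every column of H is a standard basis vector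
    have hsingle : ∀ kk : Fin q, ∃ i, H i kk ≠ 0 ∧ ∀ u, u ≠ i → H u kk = 0 := by
      intro kk
      obtain ⟨i, hi⟩ := hHcol kk
      refine ⟨i, hi, fun u hu => ?_⟩
      by_contra h
      rcases hcolsup kk u i hu h hi with h1 | h1
      · subst h1
        exact hpair ⟨kk, i, Ne.symm hu, h, hi⟩
      · subst h1
        exact hpair ⟨kk, u, hu, hi, h⟩
    choose f hf1 hf2 using hsingle
    have hfval : ∀ i kk, H i kk = if i = f kk then 1 else 0 := by
      intro i kk
      by_cases h : i = f kk
      · rw [if_pos h, h]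
        exact le_antisymm (hP2 _ _) (Nat.one_le_iff_ne_zero.2 (hf1 kk))
      · rw [if_neg h]
        exact hf2 kk i h
    by_cases hbig : ∃ k1 k2 k3 : Fin q, k1 ≠ k2 ∧ k1 ≠ k3 ∧ k2 ≠ k3 ∧
        f k1 = f k2 ∧ f k1 = f k3
    · obtain ⟨k1, k2, k3, h12, h13, h23, e2, e3⟩ := hbig
      set x : Fin q → ℝ := fun j => if j = k1 then 1 else if j = k2 then 1 else
        if j = k3 then 1 else 0 with hx
      have hxk1 : x k1 = 1 := by simp [hx]
      have hxk2 : x k2 = 1 := by simp [hx, Ne.symm h12]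
      have hxk3 : x k3 = 1 := by simp [hx, Ne.symm h13, Ne.symm h23]
      have hxz : ∀ j, j ≠ k1 → j ≠ k2 → j ≠ k3 → x j = 0 := by
        intro j h1 h2 h3; simp [hx, h1, h2, h3]
      have hxs : ∑ j, (x j)^2 = 3 := by
        rw [sum_support_three h12 h13 h23 _
          (fun j h1 h2 h3 => by rw [hxz j h1 h2 h3]; ring)]
        rw [hxk1, hxk2, hxk3]; norm_num
      have hmv : ∀ i, A.mulVec x i = if i = f k1 then 3 else 0 := by
        intro i
        rw [hmvdef, sum_support_three h12 h13 h23 _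
          (fun j h1 h2 h3 => by rw [hxz j h1 h2 h3]; ring)]
        rw [hxk1, hxk2, hxk3, hAval, hAval, hAval, hfval i k1, hfval i k2, hfval i k3,
          ← e2, ← e3]
        by_cases h : i = f k1 <;> simp [h] <;> norm_num
      have hS : ∑ i, (A.mulVec x i)^2 = 9 := by
        have : ∀ i, (A.mulVec x i)^2 = if i = f k1 then 9 else 0 := by
          intro i; rw [hmv]; by_cases h : i = f k1 <;> simp [h] <;> norm_num
        rw [Finset.sum_congr rfl (fun i _ => this i), Finset.sum_ite_eq' Finset.univ (f k1)]
        simp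
      have hmain := mulVec_sq_le A x
      rw [hS, hxs, heq] at hmain
      nlinarith
    · -- all fibers have ≤ 2 elements
      push_neg at hbig
      have hcard : ∀ i : Fin 5, (Finset.univ.filter (fun kk => f kk = i)).card ≤ 2 := by
        intro i
        by_contra hcon
        push_neg at hcon
        obtain ⟨k1, k2, k3, hk1, hk2, hk3, h12, h13, h23⟩ :=
          Finset.two_lt_card_iff.1 hcon
        simp only [Finset.mem_filter, Finset.mem_univ, true_and] at hk1 hk2 hk3
        exact (hbig k1 k2 k3 h12 h13 h23 (hk1.trans hk2.symm)) (hk1.trans hk3.symm)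
      have hup : (euclideanOpNorm A)^2 ≤ 2 := by
        apply opNorm_sq_le _ _ (by norm_num)
        intro x
        have hmv : ∀ i, A.mulVec x i =
            ∑ kk ∈ Finset.univ.filter (fun kk => f kk = i), x kk := by
          intro i
          rw [hmvdef, Finset.sum_filter]
          refine Finset.sum_congr rfl fun j _ => ?_
          rw [hAval, hfval i j]
          by_cases h : f j = i
          · rw [if_pos h, if_pos h.symm]; norm_num
          · rw [if_neg h, if_neg (Ne.symm h)]; norm_num
        calc ∑ i, (A.mulVec x i)^2
            = ∑ i, (∑ kk ∈ Finset.univ.filter (fun kk => f kk = i), x kk)^2 := by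
              exact Finset.sum_congr rfl fun i _ => by rw [hmv]
          _ ≤ ∑ i, ((Finset.univ.filter (fun kk => f kk = i)).card : ℝ) *
              ∑ kk ∈ Finset.univ.filter (fun kk => f kk = i), (x kk)^2 :=
              Finset.sum_le_sum (fun i _ => sq_sum_le_card_mul_sum_sq)
          _ ≤ ∑ i, 2 * ∑ kk ∈ Finset.univ.filter (fun kk => f kk = i), (x kk)^2 := by
              refine Finset.sum_le_sum (fun i _ => ?_)
              have h1 : ((Finset.univ.filter (fun kk => f kk = i)).card : ℝ) ≤ 2 := by
                exact_mod_cast hcard i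
              have h2 : 0 ≤ ∑ kk ∈ Finset.univ.filter (fun kk => f kk = i), (x kk)^2 :=
                Finset.sum_nonneg (fun _ _ => sq_nonneg _)
              exact mul_le_mul_of_nonneg_right h1 h2
          _ = 2 * ∑ i, ∑ kk ∈ Finset.univ.filter (fun kk => f kk = i), (x kk)^2 :=
              (Finset.mul_sum _ _ _).symm
          _ = 2 * ∑ kk, (x kk)^2 := by
              rw [Finset.sum_fiberwise]
      rw [heq] at hup
      nlinarith
end
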